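/- arXiv:1610.06005 — 2 statements merged into one kernel-verified Lean document; each statement's English description precedes it below -/
import Mathlib

section
/- Let n ≥ 2, let δ > 0, let P = (P_1, …, P_n) : [u, v] → Δ_n be a rigid n-system of mesh δ on a compact subinterval [u, v] of (0,∞), and let c = (c_1, …, c_n) be a strictly increasing sequence of positive multiples of δ with P_j(v) ≤ c_j for j = 1, …, n. Set w = c_1 + ⋯ + c_n. Then there exist a rigid n-system P̃ = (P̃_1, …, P̃_n) : [u, w] → Δ_n of mesh δ and a surjective map A : [u, w] → [u, v] such that: (i) P̃(q) = P(q) and A(q) = q for each q ∈ [u, v] with P_n(q) < P_n(v); (ii) P̃(w) = c; (iii) 0 ≤ P̃_j(q) − P_j(A(q)) ≤ c_j − P_j(v) for each q ∈ [u, w] and each j = 1, …, n. -/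
open Filter Set Pointwise Topology

noncomputable section

/-- Points of `ℝ^n`. -/
abbrev RVec (n : ℕ) := Fin n → ℝ

/-- The vector of `ℝ^n` with a `1` in position `j` (0-based) and `0` elsewhere;
`eVec n 0` is the first canonical basis vector `e_1`. -/
def eVec (n : ℕ) (j : ℕ) : RVec n := fun i => if (i : ℕ) = j then 1 else 0

/-- `P` is an `n`-system on the subinterval `I` of `[0,∞)`:
`I` is an order-connected subset of `[0,∞)` with nonempty interior, and conditions
(S1), (S2), (S3) hold at every `q ∈ I`. -/
def IsNSystem (n : ℕ) (I : Set ℝ) (P : ℝ → RVec n) : Prop :=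
  I ⊆ Set.Ici (0 : ℝ) ∧ I.OrdConnected ∧ (interior I).Nonempty ∧
  ∀ q ∈ I,
    ((∀ i, 0 ≤ P q i) ∧ Monotone (P q) ∧ (∑ i, P q i) = q) ∧
    ∃ ε > (0 : ℝ), ∃ k ℓ : Fin n,
      (∀ t ∈ I ∩ Set.Icc (q - ε) q, P t = P q + (t - q) • eVec n ℓ) ∧
      (∀ t ∈ I ∩ Set.Icc q (q + ε), P t = P q + (t - q) • eVec n k) ∧
      (q ∈ interior I → ℓ < k → ∀ i : Fin n, ℓ ≤ i → i ≤ k → P q i = P q ℓ)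

/-- `P` is a proper `n`-system on `I`: it is an `n`-system whose first component is
unbounded (by the monotonicity (S1) of the components, this is equivalent to all
components simultaneously exceeding any given bound). -/
def IsProperSys (n : ℕ) (I : Set ℝ) (P : ℝ → RVec n) : Prop :=
  IsNSystem n I P ∧ ∀ M : ℝ, ∃ q ∈ I, ∀ i, M < P q i

/-- The set `F(P)` of limits of `q_i⁻¹ • P(q_i)` along strictly increasing unbounded
sequences `(q_i)` in `I`. -/
def FSet (n : ℕ) (I : Set ℝ) (P : ℝ → RVec n) : Set (RVec n) :=
  {x | ∃ q : ℕ → ℝ, (∀ i, q i ∈ I) ∧ StrictMono q ∧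
    Tendsto q atTop atTop ∧ Tendsto (fun i => (q i)⁻¹ • P (q i)) atTop (𝓝 x)}

/-- The set `F(P, e₁)`: as `F(P)`, but with the extra requirement that the right
derivative of `P` at each `q_i` is the first basis vector `e_1`. -/
def FSetE1 (n : ℕ) (I : Set ℝ) (P : ℝ → RVec n) : Set (RVec n) :=
  {x | ∃ q : ℕ → ℝ, (∀ i, q i ∈ I) ∧ StrictMono q ∧ Tendsto q atTop atTop ∧
    (∀ i, ∃ ε > (0 : ℝ), ∀ t ∈ I ∩ Set.Icc (q i) (q i + ε),
      P t = P (q i) + (t - q i) • eVec n 0) ∧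
    Tendsto (fun i => (q i)⁻¹ • P (q i)) atTop (𝓝 x)}

/-- `q` is a switch number of the `n`-system `P` on `I`: a point of `I` on the boundary
of `I`, or an interior point where the local slopes `e_k` (right) and `e_ℓ` (left)
from (S2) satisfy `k < ℓ`. -/
def IsSwitchNumber (n : ℕ) (I : Set ℝ) (P : ℝ → RVec n) (q : ℝ) : Prop :=
  q ∈ I ∧ (q ∈ frontier I ∨
    (q ∈ interior I ∧ ∃ ε > (0 : ℝ), ∃ k ℓ : Fin n, k < ℓ ∧
      (∀ t ∈ I ∩ Set.Icc (q - ε) q, P t = P q + (t - q) • eVec n ℓ) ∧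
      (∀ t ∈ I ∩ Set.Icc q (q + ε), P t = P q + (t - q) • eVec n k)))

/-- `q` is a division number of the `n`-system `P` on `I`: a point of `I` on the boundary
of `I`, or an interior point where `P` is not differentiable, i.e. where the left and
right slopes from (S2) differ. -/
def IsDivisionNumber (n : ℕ) (I : Set ℝ) (P : ℝ → RVec n) (q : ℝ) : Prop :=
  q ∈ I ∧ (q ∈ frontier I ∨
    (q ∈ interior I ∧ ∃ ε > (0 : ℝ), ∃ k ℓ : Fin n, k ≠ ℓ ∧
      (∀ t ∈ I ∩ Set.Icc (q - ε) q, P t = P q + (t - q) • eVec n ℓ) ∧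
      (∀ t ∈ I ∩ Set.Icc q (q + ε), P t = P q + (t - q) • eVec n k)))

/-- A non-degenerate `n`-system: an `n`-system whose domain is a closed subinterval
of `(0,∞)` and whose switch points all have `n` distinct positive coordinates. -/
def IsNonDegenerate (n : ℕ) (I : Set ℝ) (P : ℝ → RVec n) : Prop :=
  IsNSystem n I P ∧ IsClosed I ∧ I ⊆ Set.Ioi (0 : ℝ) ∧
  ∀ q, IsSwitchNumber n I P q → (∀ i, 0 < P q i) ∧ StrictMono (P q)

/-- A rigid `n`-system of mesh `δ`: a non-degenerate `n`-system whose switch points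
belong to `δℤ^n`. -/
def IsRigid (n : ℕ) (δ : ℝ) (I : Set ℝ) (P : ℝ → RVec n) : Prop :=
  IsNonDegenerate n I P ∧
  ∀ q, IsSwitchNumber n I P q → ∀ i, ∃ m : ℤ, P q i = δ * m

/-- A self-similar system: the domain is unbounded and there is `ρ > 1` with
`P(ρq) = ρ • P(q)` for all `q` in the domain. -/
def IsSelfSimilar (n : ℕ) (I : Set ℝ) (P : ℝ → RVec n) : Prop :=
  ¬ BddAbove I ∧ ∃ ρ : ℝ, 1 < ρ ∧ ∀ q ∈ I, ρ * q ∈ I ∧ P (ρ * q) = ρ • P q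

/-- The cube `[-ε, ε]^n`. -/
def cubeNbhd (n : ℕ) (ε : ℝ) : Set (RVec n) := {y | ∀ i, |y i| ≤ ε}

/-- The distance `dist(E, F)`: the infimum of all `ε > 0` such that
`E ⊆ F + [-ε,ε]^n` and `F ⊆ E + [-ε,ε]^n`. -/
def cubeDist (n : ℕ) (E F : Set (RVec n)) : ℝ :=
  sInf {ε : ℝ | 0 < ε ∧ E ⊆ F + cubeNbhd n ε ∧ F ⊆ E + cubeNbhd n ε}

/-- `μ_T(P)`: the point of `ℝ^m` whose `j`-th coordinate is
`liminf_{q → ∞, q ∈ I} T_j(P(q))/q`. -/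
def muT (n m : ℕ) (T : RVec n → RVec m) (I : Set ℝ) (P : ℝ → RVec n) : RVec m :=
  fun j => Filter.liminf (fun q => T (P q) j / q) (atTop ⊓ 𝓟 I)

/-- `liminf` of a sequence of subsets of `ℝ^n`: the set of limits of convergent
sequences `(x_i)` with `x_i ∈ F i` for every `i`. -/
def setLiminf (n : ℕ) (F : ℕ → Set (RVec n)) : Set (RVec n) :=
  {x | ∃ y : ℕ → RVec n, (∀ i, y i ∈ F i) ∧ Tendsto y atTop (𝓝 x)}

/-- `limsup` of a sequence of subsets of `ℝ^n`: the set of accumulation points of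
sequences `(x_i)` with `x_i ∈ F i` for every `i`, i.e. limits of convergent
subsequences. -/
def setLimsup (n : ℕ) (F : ℕ → Set (RVec n)) : Set (RVec n) :=
  {x | ∃ (y : ℕ → RVec n) (φ : ℕ → ℕ), (∀ i, y i ∈ F i) ∧ StrictMono φ ∧
    Tendsto (y ∘ φ) atTop (𝓝 x)}

/-!
Write `σ_j` (`settleTime`) for the time at which `P_j` reaches its final value `P_j(v)` and
`ρ_i = max_{j ≥ i} σ_j` (`tailSettleTime`); thus `ρ_0 = v`, and the coordinates `i, …, n-1` are
frozen on `[ρ_i, v]`. Put `D_j = c_j - P_j(v)` (`gap`), `S_i = ∑_{j > i} D_j` (`tailGap`) and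
`ρ_n = u`. Going down from the last coordinate, `P̃` alternates two kinds of phases: it *replays*
`P` on `[ρ_{i+1}, ρ_i]` with delay `S_i`, the coordinates `j > i` being already raised to `c_j`;
then it *rides* coordinate `i` from `P_i(v)` up to `c_i` during `[ρ_i + S_i, ρ_i + S_i + D_i]`,
while the clock `A` of `P` is stopped at `ρ_i`. The last ride ends at `v + ∑ D_j = ∑ c_j` in the
point `c`.

Within a replay, `P̃` inherits (S2) and (S3) from `P`. At a junction the velocity index cannot go
up: the ride of coordinate `i` is entered with a velocity `e_m`, `m ≥ i`, because some coordinate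
`m ≥ i` settles at `ρ_i`, and the replay after it only moves coordinates `< i`. Hence (S3) only
matters inside replays, and every switch point of `P̃` is reached in a closed replay phase, where
`P̃ = (P_0(t), …, P_i(t), c_{i+1}, …, c_{n-1})` for a switch number `t` of `P` (an old one or
some `ρ_j`); such a point is rigid of mesh `δ` because `P(t)` and `c` are.
-/

section Slopes

variable {n : ℕ}

lemma eVec_apply (k j : Fin n) : eVec n k j = if j = k then 1 else 0 := by
  simp [eVec, Fin.ext_iff]

lemma smul_eVec_apply (s : ℝ) (k j : Fin n) :
    (s • eVec n k) j = if j = k then s else 0 := by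
  simp [eVec_apply]

lemma eq_of_smul_eVec_eq {s : ℝ} {k ℓ : Fin n} (hs : s ≠ 0)
    (h : s • eVec n k = s • eVec n ℓ) : k = ℓ := by
  by_contra hkℓ
  simpa [eVec_apply, hkℓ, hs] using congrFun h k

def HasRightSlope (I : Set ℝ) (P : ℝ → RVec n) (q : ℝ) (k : Fin n) : Prop :=
  ∀ᶠ t in 𝓝[≥] q, t ∈ I → P t = P q + (t - q) • eVec n k

def HasLeftSlope (I : Set ℝ) (P : ℝ → RVec n) (q : ℝ) (ℓ : Fin n) : Prop :=
  ∀ᶠ t in 𝓝[≤] q, t ∈ I → P t = P q + (t - q) • eVec n ℓ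

variable {I : Set ℝ} {P : ℝ → RVec n} {q : ℝ} {k ℓ : Fin n}

lemma hasRightSlope_iff : HasRightSlope I P q k ↔
    ∃ ε > 0, ∀ t ∈ I ∩ Icc q (q + ε), P t = P q + (t - q) • eVec n k := by
  refine mem_nhdsGE_iff_exists_Icc_subset.trans ⟨?_, ?_⟩
  · rintro ⟨r, hqr, h⟩
    exact ⟨r - q, sub_pos.2 hqr, fun t ht => h ⟨ht.2.1, by linarith [ht.2.2]⟩ ht.1⟩
  · rintro ⟨ε, hε, h⟩
    exact ⟨q + ε, by linarith, fun t ht htI => h t ⟨htI, ht⟩⟩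

lemma hasLeftSlope_iff : HasLeftSlope I P q ℓ ↔
    ∃ ε > 0, ∀ t ∈ I ∩ Icc (q - ε) q, P t = P q + (t - q) • eVec n ℓ := by
  refine mem_nhdsLE_iff_exists_Icc_subset.trans ⟨?_, ?_⟩
  · rintro ⟨l, hlq, h⟩
    exact ⟨q - l, sub_pos.2 hlq, fun t ht => h ⟨by linarith [ht.2.1], ht.2.2⟩ ht.1⟩
  · rintro ⟨ε, hε, h⟩
    exact ⟨q - ε, by linarith, fun t ht htI => h t ⟨htI, ht⟩⟩

lemma exists_pos_of_hasSlopes (hk : HasRightSlope I P q k) (hℓ : HasLeftSlope I P q ℓ) :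
    ∃ ε > (0 : ℝ),
      (∀ t ∈ I ∩ Icc (q - ε) q, P t = P q + (t - q) • eVec n ℓ) ∧
      (∀ t ∈ I ∩ Icc q (q + ε), P t = P q + (t - q) • eVec n k) := by
  obtain ⟨ε₁, hε₁, h₁⟩ := hasRightSlope_iff.1 hk
  obtain ⟨ε₂, hε₂, h₂⟩ := hasLeftSlope_iff.1 hℓ
  refine ⟨min ε₁ ε₂, lt_min hε₁ hε₂, fun t ht => h₂ t ⟨ht.1, ?_, ht.2.2⟩,
    fun t ht => h₁ t ⟨ht.1, ht.2.1, ?_⟩⟩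
  · linarith [ht.2.1, min_le_right ε₁ ε₂]
  · linarith [ht.2.2, min_le_left ε₁ ε₂]

lemma hasRightSlope_of_subset_Iic (hI : I ⊆ Iic q) : HasRightSlope I P q k := by
  filter_upwards [self_mem_nhdsWithin] with t hqt htI
  simp [le_antisymm (hI htI) (mem_Ici.1 hqt)]

lemma hasLeftSlope_of_subset_Ici (hI : I ⊆ Ici q) : HasLeftSlope I P q ℓ := by
  filter_upwards [self_mem_nhdsWithin] with t htq htI
  simp [le_antisymm (mem_Iic.1 htq) (hI htI)]

lemma HasRightSlope.eventually_nhdsGT (h : HasRightSlope I P q k) (hI : I ∈ 𝓝[>] q) :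
    ∀ᶠ t in 𝓝[>] q, q < t ∧ t ∈ I ∧ P t = P q + (t - q) • eVec n k := by
  filter_upwards [h.filter_mono (nhdsWithin_mono _ Ioi_subset_Ici_self), hI,
    self_mem_nhdsWithin] with t ht htI hqt using ⟨hqt, htI, ht htI⟩

lemma HasLeftSlope.eventually_nhdsLT (h : HasLeftSlope I P q ℓ) (hI : I ∈ 𝓝[<] q) :
    ∀ᶠ t in 𝓝[<] q, t < q ∧ t ∈ I ∧ P t = P q + (t - q) • eVec n ℓ := by
  filter_upwards [h.filter_mono (nhdsWithin_mono _ Iio_subset_Iic_self), hI,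
    self_mem_nhdsWithin] with t ht htI htq using ⟨htq, htI, ht htI⟩

lemma HasRightSlope.unique {k' : Fin n} (h : HasRightSlope I P q k) (h' : HasRightSlope I P q k')
    (hI : I ∈ 𝓝[>] q) : k = k' := by
  obtain ⟨t, ⟨hqt, -, e⟩, -, -, e'⟩ :=
    ((h.eventually_nhdsGT hI).and (h'.eventually_nhdsGT hI)).exists
  exact eq_of_smul_eVec_eq (sub_ne_zero.2 hqt.ne') (add_left_cancel (e.symm.trans e'))

lemma HasLeftSlope.unique {ℓ' : Fin n} (h : HasLeftSlope I P q ℓ) (h' : HasLeftSlope I P q ℓ')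
    (hI : I ∈ 𝓝[<] q) : ℓ = ℓ' := by
  obtain ⟨t, ⟨htq, -, e⟩, -, -, e'⟩ :=
    ((h.eventually_nhdsLT hI).and (h'.eventually_nhdsLT hI)).exists
  exact eq_of_smul_eVec_eq (sub_ne_zero.2 htq.ne) (add_left_cancel (e.symm.trans e'))

lemma HasRightSlope.tendsto (h : HasRightSlope I P q k) (hI : I ∈ 𝓝[>] q) :
    Tendsto P (𝓝[>] q) (𝓝 (P q)) := by
  have hc : Continuous fun t : ℝ => P q + (t - q) • eVec n k := by fun_prop
  have hlin := (hc.tendsto q).mono_left (nhdsWithin_le_nhds (s := Ioi q))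
  rw [sub_self, zero_smul, add_zero] at hlin
  refine hlin.congr' ?_
  filter_upwards [h.eventually_nhdsGT hI] with t ht using ht.2.2.symm

lemma HasRightSlope.apply_le (h : HasRightSlope I P q k) (j : Fin n) :
    ∀ᶠ t in 𝓝[≥] q, t ∈ I → P q j ≤ P t j := by
  filter_upwards [h, self_mem_nhdsWithin] with t ht hqt htI
  rw [ht htI, Pi.add_apply, smul_eVec_apply]
  split_ifs <;> linarith [sub_nonneg.2 (show q ≤ t from hqt)]

lemma HasLeftSlope.apply_le (h : HasLeftSlope I P q ℓ) (j : Fin n) :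
    ∀ᶠ t in 𝓝[≤] q, t ∈ I → P t j ≤ P q j := by
  filter_upwards [h, self_mem_nhdsWithin] with t ht htq htI
  rw [ht htI, Pi.add_apply, smul_eVec_apply]
  split_ifs <;> linarith [sub_nonpos.2 (show t ≤ q from htq)]

end Slopes

lemma monotoneOn_Icc_of_eventually {a b : ℝ} {f : ℝ → ℝ}
    (hL : ∀ q ∈ Icc a b, ∀ᶠ t in 𝓝[≤] q, t ∈ Icc a b → f t ≤ f q)
    (hR : ∀ q ∈ Icc a b, ∀ᶠ t in 𝓝[≥] q, t ∈ Icc a b → f q ≤ f t) :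
    MonotoneOn f (Icc a b) := by
  intro x hx y hy hxy
  set S := {t | t ∈ Icc x y ∧ f x ≤ f t}
  have hSbdd : BddAbove S := ⟨y, fun t ht => ht.1.2⟩
  have hxS : x ∈ S := ⟨⟨le_rfl, hxy⟩, le_rfl⟩
  have hxT : x ≤ sSup S := le_csSup hSbdd hxS
  have hTy : sSup S ≤ y := csSup_le ⟨x, hxS⟩ fun t ht => ht.1.2
  have hTI : sSup S ∈ Icc a b := ⟨hx.1.trans hxT, hTy.trans hy.2⟩
  have hfT : f x ≤ f (sSup S) := by
    obtain ⟨l, hlT, hl⟩ := mem_nhdsLE_iff_exists_Icc_subset.1 (hL _ hTI)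
    obtain ⟨t, htS, hlt⟩ := exists_lt_of_lt_csSup ⟨x, hxS⟩ hlT
    exact htS.2.trans <|
      hl ⟨hlt.le, le_csSup hSbdd htS⟩ ⟨hx.1.trans htS.1.1, htS.1.2.trans hy.2⟩
  obtain hTy | hTy := hTy.eq_or_lt
  · exact hTy ▸ hfT
  obtain ⟨r, hTr, hr⟩ := mem_nhdsGE_iff_exists_Icc_subset.1 (hR _ hTI)
  have hs : min r y ∈ S := by
    have hTs : sSup S ≤ min r y := le_min hTr.le hTy.le
    refine ⟨⟨hxT.trans hTs, min_le_right _ _⟩, hfT.trans (hr ⟨hTs, min_le_left _ _⟩ ?_)⟩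
    exact ⟨hTI.1.trans hTs, (min_le_right _ _).trans hy.2⟩
  exact absurd (le_csSup hSbdd hs) (not_le.2 (lt_min hTr hTy))

section NSystem

variable {n : ℕ} {I : Set ℝ} {P : ℝ → RVec n} {q : ℝ} {k ℓ : Fin n}

lemma IsNSystem.apply_nonneg_monotone_sum (hP : IsNSystem n I P) (hq : q ∈ I) :
    (∀ i, 0 ≤ P q i) ∧ Monotone (P q) ∧ ∑ i, P q i = q :=
  (hP.2.2.2 q hq).1

lemma IsNSystem.exists_slopes (hP : IsNSystem n I P) (hq : q ∈ I) :
    ∃ k ℓ, HasRightSlope I P q k ∧ HasLeftSlope I P q ℓ ∧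
      (q ∈ interior I → ℓ < k → ∀ i, ℓ ≤ i → i ≤ k → P q i = P q ℓ) := by
  obtain ⟨ε, hε, k, ℓ, hL, hR, hS3⟩ := (hP.2.2.2 q hq).2
  exact ⟨k, ℓ, hasRightSlope_iff.2 ⟨ε, hε, hR⟩, hasLeftSlope_iff.2 ⟨ε, hε, hL⟩,
    hS3⟩

lemma isNSystem_of_slopes (hI₀ : I ⊆ Ici 0) (hI : I.OrdConnected) (hIi : (interior I).Nonempty)
    (hS1 : ∀ q ∈ I, (∀ i, 0 ≤ P q i) ∧ Monotone (P q) ∧ ∑ i, P q i = q)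
    (hR : ∀ q ∈ I, ∃ k, HasRightSlope I P q k)
    (hL : ∀ q ∈ I, ∃ ℓ, HasLeftSlope I P q ℓ)
    (hS3 : ∀ q ∈ interior I, ∀ k ℓ, HasRightSlope I P q k → HasLeftSlope I P q ℓ →
      ℓ < k → ∀ i, ℓ ≤ i → i ≤ k → P q i = P q ℓ) :
    IsNSystem n I P := by
  refine ⟨hI₀, hI, hIi, fun q hq => ⟨hS1 q hq, ?_⟩⟩
  obtain ⟨k, hk⟩ := hR q hq
  obtain ⟨ℓ, hℓ⟩ := hL q hq
  obtain ⟨ε, hε, hεL, hεR⟩ := exists_pos_of_hasSlopes hk hℓ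
  exact ⟨ε, hε, k, ℓ, hεL, hεR, fun hqI => hS3 q hqI k ℓ hk hℓ⟩

lemma isSwitchNumber_of_slopes (hq : q ∈ interior I) (hkℓ : k < ℓ)
    (hk : HasRightSlope I P q k) (hℓ : HasLeftSlope I P q ℓ) : IsSwitchNumber n I P q := by
  obtain ⟨ε, hε, hεL, hεR⟩ := exists_pos_of_hasSlopes hk hℓ
  exact ⟨interior_subset hq, Or.inr ⟨hq, ε, hε, k, ℓ, hkℓ, hεL, hεR⟩⟩

lemma IsSwitchNumber.exists_slopes (h : IsSwitchNumber n I P q) :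
    q ∈ frontier I ∨
      q ∈ interior I ∧
        ∃ k ℓ, k < ℓ ∧ HasRightSlope I P q k ∧ HasLeftSlope I P q ℓ := by
  obtain ⟨-, hfr | ⟨hq, ε, hε, k, ℓ, hkℓ, hL, hR⟩⟩ := h
  · exact Or.inl hfr
  · exact Or.inr ⟨hq, k, ℓ, hkℓ, hasRightSlope_iff.2 ⟨ε, hε, hR⟩,
      hasLeftSlope_iff.2 ⟨ε, hε, hL⟩⟩

lemma IsNSystem.monotoneOn_apply {u v : ℝ} (hP : IsNSystem n (Icc u v) P) (j : Fin n) :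
    MonotoneOn (fun t => P t j) (Icc u v) := by
  refine monotoneOn_Icc_of_eventually (fun q hq => ?_) (fun q hq => ?_)
  · obtain ⟨_, _, -, hℓ, -⟩ := hP.exists_slopes hq
    exact hℓ.apply_le j
  · obtain ⟨_, _, hk, -, -⟩ := hP.exists_slopes hq
    exact hk.apply_le j

lemma isSwitchNumber_left {u v : ℝ} (huv : u ≤ v) :
    IsSwitchNumber n (Icc u v) P u :=
  ⟨left_mem_Icc.2 huv, Or.inl (by simp [frontier_Icc huv])⟩

lemma isSwitchNumber_right {u v : ℝ} (huv : u ≤ v) :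
    IsSwitchNumber n (Icc u v) P v :=
  ⟨right_mem_Icc.2 huv, Or.inl (by simp [frontier_Icc huv])⟩

end NSystem

section SettleTime

variable {n : ℕ} {u v t : ℝ} {P : ℝ → RVec n} {i j k ℓ : Fin n}

def settleTime (u v : ℝ) (P : ℝ → RVec n) (j : Fin n) : ℝ :=
  sInf {t | t ∈ Icc u v ∧ P t j = P v j}

lemma settleTime_mem (huv : u ≤ v) (j : Fin n) : settleTime u v P j ∈ Icc u v :=
  ⟨le_csInf ⟨v, ⟨huv, le_rfl⟩, rfl⟩ fun _ ht => ht.1.1,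
    csInf_le ⟨u, fun _ ht => ht.1.1⟩ ⟨⟨huv, le_rfl⟩, rfl⟩⟩

lemma apply_eq_iff_settleTime_le (hP : IsNSystem n (Icc u v) P) (huv : u ≤ v)
    (ht : t ∈ Icc u v) : P t j = P v j ↔ settleTime u v P j ≤ t := by
  have hv : v ∈ Icc u v := ⟨huv, le_rfl⟩
  have hmono := hP.monotoneOn_apply j
  have hgt : ∀ t ∈ Icc u v, settleTime u v P j < t → P t j = P v j := fun t ht hlt => by
    obtain ⟨s, hs, hst⟩ := exists_lt_of_csInf_lt (s := {t | t ∈ Icc u v ∧ P t j = P v j})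
      ⟨v, hv, rfl⟩ hlt
    exact le_antisymm (hmono ht hv ht.2) (hs.2 ▸ hmono hs.1 ht hst.le)
  refine ⟨fun h => csInf_le ⟨u, fun _ hs => hs.1.1⟩ ⟨ht, h⟩, fun h => ?_⟩
  obtain h | rfl := h.lt_or_eq
  · exact hgt t ht h
  obtain htv | htv := ht.2.lt_or_eq
  · -- the infimum is attained since `P` is right-continuous there
    obtain ⟨k, -, hk, -, -⟩ := hP.exists_slopes ht
    have hI : Icc u v ∈ 𝓝[>] settleTime u v P j := Icc_mem_nhdsGT_of_mem ⟨ht.1, htv⟩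
    refine tendsto_nhds_unique (((continuous_apply j).tendsto _).comp (hk.tendsto hI))
      (tendsto_const_nhds.congr' ?_)
    filter_upwards [hI, self_mem_nhdsWithin] with s hs hlt using (hgt s hs hlt).symm
  · rw [htv]

lemma apply_lt_of_lt_settleTime (hP : IsNSystem n (Icc u v) P) (huv : u ≤ v)
    (ht : t ∈ Icc u v) (h : t < settleTime u v P j) : P t j < P v j :=
  (hP.monotoneOn_apply j ht ⟨huv, le_rfl⟩ ht.2).lt_of_ne
    fun he => h.not_ge ((apply_eq_iff_settleTime_le hP huv ht).1 he)

lemma not_hasRightSlope_of_settleTime_le (hP : IsNSystem n (Icc u v) P) (huv : u ≤ v)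
    (ht : t ∈ Icc u v) (htv : t < v) (h : settleTime u v P k ≤ t) :
    ¬ HasRightSlope (Icc u v) P t k := fun hk => by
  have hI : Icc u v ∈ 𝓝[>] t := Icc_mem_nhdsGT_of_mem ⟨ht.1, htv⟩
  obtain ⟨s, hts, hs, e⟩ := (hk.eventually_nhdsGT hI).exists
  have e := congrFun e k
  rw [Pi.add_apply, smul_eVec_apply, if_pos rfl,
    (apply_eq_iff_settleTime_le hP huv hs).2 (h.trans hts.le),
    (apply_eq_iff_settleTime_le hP huv ht).2 h] at e
  linarith

lemma HasLeftSlope.eq_of_settleTime (hP : IsNSystem n (Icc u v) P) (huv : u ≤ v)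
    (hu : u < settleTime u v P j) (h : HasLeftSlope (Icc u v) P (settleTime u v P j) ℓ) :
    ℓ = j := by
  by_contra hℓ
  have hσ := settleTime_mem (P := P) huv j
  have hI : Icc u v ∈ 𝓝[<] settleTime u v P j := Icc_mem_nhdsLT_of_mem ⟨hu, hσ.2⟩
  obtain ⟨s, hsσ, hs, e⟩ := (h.eventually_nhdsLT hI).exists
  have e := congrFun e j
  rw [Pi.add_apply, smul_eVec_apply, if_neg (Ne.symm hℓ), add_zero,
    (apply_eq_iff_settleTime_le hP huv hσ).2 le_rfl] at e
  exact (apply_lt_of_lt_settleTime hP huv hs hsσ).ne e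

def tailSettleTime (u v : ℝ) (P : ℝ → RVec n) (i : Fin n) : ℝ :=
  (Finset.Ici i).sup' Finset.nonempty_Ici (settleTime u v P)

lemma settleTime_le_tailSettleTime (h : i ≤ j) : settleTime u v P j ≤ tailSettleTime u v P i :=
  Finset.le_sup' _ (Finset.mem_Ici.2 h)

lemma tailSettleTime_antitone : Antitone (tailSettleTime u v P) := fun _ _ h =>
  Finset.sup'_le _ _ fun _ hj => settleTime_le_tailSettleTime (h.trans (Finset.mem_Ici.1 hj))

lemma exists_tailSettleTime_eq (i : Fin n) :
    ∃ m, i ≤ m ∧ tailSettleTime u v P i = settleTime u v P m := by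
  obtain ⟨m, hm, he⟩ := Finset.exists_mem_eq_sup' Finset.nonempty_Ici (settleTime u v P)
  exact ⟨m, Finset.mem_Ici.1 hm, he⟩

lemma tailSettleTime_mem (huv : u ≤ v) (i : Fin n) : tailSettleTime u v P i ∈ Icc u v := by
  obtain ⟨m, -, hm⟩ := exists_tailSettleTime_eq (u := u) (v := v) (P := P) i
  exact hm ▸ settleTime_mem huv m

lemma apply_eq_of_tailSettleTime_le (hP : IsNSystem n (Icc u v) P) (huv : u ≤ v) (hij : i ≤ j)
    (ht : t ∈ Icc u v) (h : tailSettleTime u v P i ≤ t) : P t j = P v j :=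
  (apply_eq_iff_settleTime_le hP huv ht).2 ((settleTime_le_tailSettleTime hij).trans h)

lemma tailSettleTime_zero [NeZero n] (hP : IsNSystem n (Icc u v) P) (huv : u ≤ v) :
    tailSettleTime u v P 0 = v := by
  have hρ := tailSettleTime_mem (P := P) huv 0
  have hsum := (hP.apply_nonneg_monotone_sum hρ).2.2
  rwa [Finset.sum_congr rfl fun j _ =>
      apply_eq_of_tailSettleTime_le hP huv (Fin.zero_le j) hρ le_rfl,
    (hP.apply_nonneg_monotone_sum ⟨huv, le_rfl⟩).2.2, eq_comm] at hsum

lemma isSwitchNumber_tailSettleTime (hP : IsNSystem n (Icc u v) P) (huv : u ≤ v) (i : Fin n) :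
    IsSwitchNumber n (Icc u v) P (tailSettleTime u v P i) := by
  have hρ := tailSettleTime_mem (P := P) huv i
  obtain hu | hu := hρ.1.eq_or_lt
  · exact hu ▸ isSwitchNumber_left huv
  obtain hv | hv := hρ.2.lt_or_eq
  swap
  · rw [hv]
    exact isSwitchNumber_right huv
  obtain ⟨k, ℓ, hk, hℓ, -⟩ := hP.exists_slopes hρ
  obtain ⟨m, him, hm⟩ := exists_tailSettleTime_eq (u := u) (v := v) (P := P) i
  have hℓm : ℓ = m := by
    rw [hm] at hu hℓ
    exact hℓ.eq_of_settleTime hP huv hu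
  have hkm : k < m := not_le.1 fun hmk =>
    not_hasRightSlope_of_settleTime_le hP huv hρ hv
      (settleTime_le_tailSettleTime (him.trans hmk)) hk
  exact isSwitchNumber_of_slopes (by rw [interior_Icc]; exact ⟨hu, hv⟩) (hℓm ▸ hkm) hk hℓ

lemma le_of_hasRightSlope_of_tailSettleTime_le (hP : IsNSystem n (Icc u v) P) (huv : u ≤ v)
    (ht : t ∈ Icc u v) (htv : t < v) (hρ : ∀ j, i < j → tailSettleTime u v P j ≤ t)
    (h : HasRightSlope (Icc u v) P t k) : k ≤ i :=
  not_lt.1 fun hik => not_hasRightSlope_of_settleTime_le hP huv ht htv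
    ((settleTime_le_tailSettleTime le_rfl).trans (hρ k hik)) h

lemma le_of_hasLeftSlope_tailSettleTime (hP : IsNSystem n (Icc u v) P) (huv : u ≤ v)
    (hu : u < tailSettleTime u v P i) (h : HasLeftSlope (Icc u v) P (tailSettleTime u v P i) ℓ) :
    i ≤ ℓ := by
  obtain ⟨m, him, hm⟩ := exists_tailSettleTime_eq (u := u) (v := v) (P := P) i
  rw [hm] at hu h
  exact (h.eq_of_settleTime hP huv hu) ▸ him

end SettleTime

section Construction

variable {n : ℕ} {u v q : ℝ} {P : ℝ → RVec n} {c : Fin n → ℝ} {i j : Fin n}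

def gap (v : ℝ) (P : ℝ → RVec n) (c : Fin n → ℝ) (j : Fin n) : ℝ := c j - P v j

def tailGap (v : ℝ) (P : ℝ → RVec n) (c : Fin n → ℝ) (i : Fin n) : ℝ :=
  ∑ j ∈ Finset.Ioi i, gap v P c j

def tailGapVec (v : ℝ) (P : ℝ → RVec n) (c : Fin n → ℝ) (i : Fin n) : RVec n :=
  fun j => if i < j then gap v P c j else 0

def rideStart (u v : ℝ) (P : ℝ → RVec n) (c : Fin n → ℝ) (i : Fin n) : ℝ :=
  tailSettleTime u v P i + tailGap v P c i

def rideEnd (u v : ℝ) (P : ℝ → RVec n) (c : Fin n → ℝ) (i : Fin n) : ℝ :=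
  rideStart u v P c i + gap v P c i

/-- The clock of `P`: `q - tailGap i` during the `i`-th replay and `tailSettleTime i` during the
`i`-th ride (`timeMap_eq_of_replay`, `timeMap_eq_of_ride`). -/
def timeMap [NeZero n] (u v : ℝ) (P : ℝ → RVec n) (c : Fin n → ℝ) (q : ℝ) : ℝ :=
  Finset.univ.sup' Finset.univ_nonempty fun i =>
    min (q - tailGap v P c i) (tailSettleTime u v P i)

/-- The length of `[rideStart j, rideEnd j] ∩ (-∞, q]`, i.e. how far coordinate `j` has been
ridden by time `q`. -/
def lift (u v : ℝ) (P : ℝ → RVec n) (c : Fin n → ℝ) (q : ℝ) : RVec n :=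
  fun j => min q (rideEnd u v P c j) - min q (rideStart u v P c j)

def extension [NeZero n] (u v : ℝ) (P : ℝ → RVec n) (c : Fin n → ℝ) (q : ℝ) : RVec n :=
  P (timeMap u v P c q) + lift u v P c q

lemma gap_nonneg (hPc : ∀ j, P v j ≤ c j) (j : Fin n) : 0 ≤ gap v P c j :=
  sub_nonneg.2 (hPc j)

lemma tailGap_nonneg (hPc : ∀ j, P v j ≤ c j) (i : Fin n) : 0 ≤ tailGap v P c i :=
  Finset.sum_nonneg fun j _ => gap_nonneg hPc j

lemma tailGap_antitone (hPc : ∀ j, P v j ≤ c j) : Antitone (tailGap v P c) := fun _ _ h =>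
  Finset.sum_le_sum_of_subset_of_nonneg (Finset.Ioi_subset_Ioi h) fun j _ _ => gap_nonneg hPc j

lemma tailGap_eq_zero_of_isMax (hi : IsMax i) : tailGap v P c i = 0 := by
  simp [tailGap, Finset.Ioi_eq_empty.2 hi]

lemma tailGapVec_of_isMax (hi : IsMax i) : tailGapVec v P c i = 0 :=
  funext fun _ => if_neg hi.not_lt

lemma sum_tailGapVec (i : Fin n) : ∑ j, tailGapVec v P c i j = tailGap v P c i := by
  simp [tailGapVec, tailGap, ← Finset.sum_filter, Finset.filter_lt_eq_Ioi]

lemma rideEnd_eq (i : Fin n) :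
    rideEnd u v P c i = tailSettleTime u v P i + ∑ j ∈ Finset.Ici i, gap v P c j := by
  rw [rideEnd, rideStart, tailGap, ← Finset.Ioi_insert, Finset.sum_insert Finset.notMem_Ioi_self]
  ring

lemma rideStart_le_rideEnd (hPc : ∀ j, P v j ≤ c j) (i : Fin n) :
    rideStart u v P c i ≤ rideEnd u v P c i :=
  le_add_of_nonneg_right (gap_nonneg hPc i)

lemma rideEnd_le_of_lt (hPc : ∀ j, P v j ≤ c j) (h : i < j) :
    rideEnd u v P c j ≤ tailSettleTime u v P j + tailGap v P c i := by
  rw [rideEnd_eq]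
  gcongr
  exact Finset.sum_le_sum_of_subset_of_nonneg (fun k hk => Finset.mem_Ioi.2
    (h.trans_le (Finset.mem_Ici.1 hk))) fun k _ _ => gap_nonneg hPc k

lemma rideEnd_le_rideStart (hPc : ∀ j, P v j ≤ c j) (h : i < j) :
    rideEnd u v P c j ≤ rideStart u v P c i :=
  (rideEnd_le_of_lt hPc h).trans (add_le_add_left (tailSettleTime_antitone h.le) _)

lemma rideStart_antitone (hPc : ∀ j, P v j ≤ c j) : Antitone (rideStart u v P c) := fun _ _ h =>
  add_le_add (tailSettleTime_antitone h) (tailGap_antitone hPc h)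

lemma rideEnd_antitone (hPc : ∀ j, P v j ≤ c j) : Antitone (rideEnd u v P c) := fun i _ h => by
  obtain rfl | h := h.eq_or_lt
  · exact le_rfl
  · exact (rideEnd_le_rideStart hPc h).trans (rideStart_le_rideEnd hPc i)

lemma exists_rideEnd_eq (h : i < j) : ∃ j', i < j' ∧ j' ≤ j ∧
    rideEnd u v P c j' = tailSettleTime u v P j' + tailGap v P c i := by
  have hi : (i : ℕ) + 1 < n := lt_of_le_of_lt (Nat.succ_le_of_lt h) j.2
  refine ⟨⟨i + 1, hi⟩, Fin.lt_def.2 (Nat.lt_succ_self _), Fin.le_def.2 h, ?_⟩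
  rw [rideEnd_eq, tailGap]
  congr 2
  ext k
  simp only [Finset.mem_Ici, Finset.mem_Ioi, Fin.le_def, Fin.lt_def]
  omega

lemma rideEnd_zero [NeZero n] (hP : IsNSystem n (Icc u v) P) (huv : u ≤ v) :
    rideEnd u v P c 0 = ∑ j, c j := by
  have hIci : Finset.Ici (0 : Fin n) = Finset.univ := by ext; simp
  rw [rideEnd_eq, tailSettleTime_zero hP huv, hIci]
  simp only [gap, Finset.sum_sub_distrib, (hP.apply_nonneg_monotone_sum ⟨huv, le_rfl⟩).2.2]
  ring

lemma exists_max_lt_rideEnd [NeZero n] (hq : q < rideEnd u v P c 0) :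
    ∃ i, (∀ j, i < j → rideEnd u v P c j ≤ q) ∧ q < rideEnd u v P c i := by
  obtain ⟨i, hi, hmax⟩ :=
    Set.exists_max_image {i | q < rideEnd u v P c i} id (Set.toFinite _) ⟨0, hq⟩
  exact ⟨i, fun j hj => not_lt.1 fun h => (hmax j h).not_gt hj, hi⟩

lemma exists_max_le_rideEnd [NeZero n] (hq : q ≤ rideEnd u v P c 0) :
    ∃ i, (∀ j, i < j → rideEnd u v P c j < q) ∧ q ≤ rideEnd u v P c i := by
  obtain ⟨i, hi, hmax⟩ :=
    Set.exists_max_image {i | q ≤ rideEnd u v P c i} id (Set.toFinite _) ⟨0, hq⟩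
  exact ⟨i, fun j hj => not_le.1 fun h => (hmax j h).not_gt hj, hi⟩

lemma tailSettleTime_le_sub_tailGap (hb : ∀ j, i < j → rideEnd u v P c j ≤ q) (hj : i < j) :
    tailSettleTime u v P j ≤ q - tailGap v P c i := by
  obtain ⟨j', hij', hj'j, he⟩ := exists_rideEnd_eq (u := u) (v := v) (P := P) (c := c) hj
  linarith [tailSettleTime_antitone (u := u) (v := v) (P := P) hj'j, hb j' hij']

lemma tailSettleTime_lt_sub_tailGap (hb : ∀ j, i < j → rideEnd u v P c j < q) (hj : i < j) :
    tailSettleTime u v P j < q - tailGap v P c i := by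
  obtain ⟨j', hij', hj'j, he⟩ := exists_rideEnd_eq (u := u) (v := v) (P := P) (c := c) hj
  linarith [tailSettleTime_antitone (u := u) (v := v) (P := P) hj'j, hb j' hij']

lemma left_le_sub_tailGap (huv : u ≤ v) (hq : u ≤ q)
    (hb : ∀ j, i < j → rideEnd u v P c j ≤ q) : u ≤ q - tailGap v P c i := by
  by_cases h : IsMax i
  · rwa [tailGap_eq_zero_of_isMax h, sub_zero]
  obtain ⟨j, hj⟩ := not_isMax_iff.1 h
  exact (tailSettleTime_mem huv j).1.trans (tailSettleTime_le_sub_tailGap hb hj)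

lemma left_lt_sub_tailGap (huv : u ≤ v) (hq : u < q)
    (hb : ∀ j, i < j → rideEnd u v P c j < q) : u < q - tailGap v P c i := by
  by_cases h : IsMax i
  · rwa [tailGap_eq_zero_of_isMax h, sub_zero]
  obtain ⟨j, hj⟩ := not_isMax_iff.1 h
  exact (tailSettleTime_mem huv j).1.trans_lt (tailSettleTime_lt_sub_tailGap hb hj)

lemma sub_tailGap_le_tailSettleTime (ha : q ≤ rideStart u v P c i) :
    q - tailGap v P c i ≤ tailSettleTime u v P i := by
  rw [rideStart] at ha
  linarith

lemma sub_tailGap_lt_tailSettleTime (ha : q < rideStart u v P c i) :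
    q - tailGap v P c i < tailSettleTime u v P i := by
  rw [rideStart] at ha
  linarith

lemma sub_tailGap_mem (huv : u ≤ v) (hq : u ≤ q) (hb : ∀ j, i < j → rideEnd u v P c j ≤ q)
    (ha : q ≤ rideStart u v P c i) : q - tailGap v P c i ∈ Icc u v :=
  ⟨left_le_sub_tailGap huv hq hb,
    (sub_tailGap_le_tailSettleTime ha).trans (tailSettleTime_mem huv i).2⟩

end Construction

section Formulas

variable {n : ℕ} {u v q : ℝ} {P : ℝ → RVec n} {c : Fin n → ℝ} {i j : Fin n}

lemma lift_apply_of_rideEnd_le (hPc : ∀ j, P v j ≤ c j) (h : rideEnd u v P c j ≤ q) :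
    lift u v P c q j = gap v P c j := by
  rw [lift, min_eq_right h, min_eq_right ((rideStart_le_rideEnd hPc j).trans h), rideEnd]
  ring

lemma lift_apply_of_le_rideStart (hPc : ∀ j, P v j ≤ c j) (h : q ≤ rideStart u v P c j) :
    lift u v P c q j = 0 := by
  rw [lift, min_eq_left h, min_eq_left (h.trans (rideStart_le_rideEnd hPc j)), sub_self]

lemma lift_nonneg (hPc : ∀ j, P v j ≤ c j) : 0 ≤ lift u v P c q j :=
  sub_nonneg.2 (min_le_min_left _ (rideStart_le_rideEnd hPc j))

lemma lift_le_gap (hPc : ∀ j, P v j ≤ c j) : lift u v P c q j ≤ gap v P c j := by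
  rcases le_total q (rideStart u v P c j) with h | h
  · exact (lift_apply_of_le_rideStart hPc h).trans_le (gap_nonneg hPc j)
  · have hb : rideEnd u v P c j = rideStart u v P c j + gap v P c j := rfl
    rw [lift, min_eq_right h]
    linarith [min_le_right q (rideEnd u v P c j)]

lemma lift_eq_of_ride (hPc : ∀ j, P v j ≤ c j) (h₁ : rideStart u v P c i ≤ q)
    (h₂ : q ≤ rideEnd u v P c i) :
    lift u v P c q = (q - rideStart u v P c i) • eVec n i + tailGapVec v P c i := by
  funext j
  rw [Pi.add_apply, smul_eVec_apply, tailGapVec]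
  rcases lt_trichotomy j i with h | rfl | h
  · rw [if_neg h.not_gt, if_neg h.ne, lift_apply_of_le_rideStart hPc
      (h₂.trans (rideEnd_le_rideStart hPc h)), add_zero]
  · rw [if_neg (lt_irrefl j), if_pos rfl, lift, min_eq_left h₂, min_eq_right h₁, add_zero]
  · rw [if_pos h, if_neg h.ne', lift_apply_of_rideEnd_le hPc
      ((rideEnd_le_rideStart hPc h).trans h₁), zero_add]

lemma lift_eq_of_replay (hPc : ∀ j, P v j ≤ c j) (hb : ∀ j, i < j → rideEnd u v P c j ≤ q)
    (ha : q ≤ rideStart u v P c i) : lift u v P c q = tailGapVec v P c i := by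
  funext j
  rw [tailGapVec]
  split_ifs with h
  · exact lift_apply_of_rideEnd_le hPc (hb j h)
  · exact lift_apply_of_le_rideStart hPc (ha.trans (rideStart_antitone hPc (not_lt.1 h)))

variable [NeZero n]

lemma min_le_timeMap (q : ℝ) (i : Fin n) :
    min (q - tailGap v P c i) (tailSettleTime u v P i) ≤ timeMap u v P c q :=
  Finset.le_sup' (fun i => min (q - tailGap v P c i) (tailSettleTime u v P i)) (Finset.mem_univ i)

lemma tailSettleTime_le_timeMap (h : rideStart u v P c i ≤ q) :
    tailSettleTime u v P i ≤ timeMap u v P c q := by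
  refine le_trans (le_min ?_ le_rfl) (min_le_timeMap q i)
  rw [rideStart] at h
  linarith

lemma timeMap_eq_of_ride (hPc : ∀ j, P v j ≤ c j) (h₁ : rideStart u v P c i ≤ q)
    (h₂ : q ≤ rideEnd u v P c i) : timeMap u v P c q = tailSettleTime u v P i := by
  refine le_antisymm (Finset.sup'_le _ _ fun i' _ => ?_) (tailSettleTime_le_timeMap h₁)
  rcases le_or_gt i i' with h | h
  · exact (min_le_right _ _).trans (tailSettleTime_antitone h)
  · exact (min_le_left _ _).trans (by linarith [rideEnd_le_of_lt (u := u) hPc h])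

lemma timeMap_eq_of_replay (hPc : ∀ j, P v j ≤ c j)
    (hb : ∀ j, i < j → rideEnd u v P c j ≤ q) (ha : q ≤ rideStart u v P c i) :
    timeMap u v P c q = q - tailGap v P c i := by
  refine le_antisymm (Finset.sup'_le _ _ fun i' _ => ?_) ?_
  · rcases lt_or_ge i i' with h | h
    · exact (min_le_right _ _).trans (tailSettleTime_le_sub_tailGap hb h)
    · exact (min_le_left _ _).trans (sub_le_sub_left (tailGap_antitone hPc h) q)
  · simpa [min_eq_left (sub_tailGap_le_tailSettleTime ha)] using
      min_le_timeMap (u := u) (v := v) (P := P) (c := c) q i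

lemma timeMap_mem (huv : u ≤ v) (hq : u ≤ q) : timeMap u v P c q ∈ Icc u v := by
  refine ⟨le_trans (le_min ?_ (tailSettleTime_mem huv ⊤).1) (min_le_timeMap q ⊤),
    Finset.sup'_le _ _ fun i _ => (min_le_right _ _).trans (tailSettleTime_mem huv i).2⟩
  rwa [tailGap_eq_zero_of_isMax isMax_top, sub_zero]

lemma extension_eq_of_ride (hPc : ∀ j, P v j ≤ c j) (h₁ : rideStart u v P c i ≤ q)
    (h₂ : q ≤ rideEnd u v P c i) : extension u v P c q =
      P (tailSettleTime u v P i) +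
        ((q - rideStart u v P c i) • eVec n i + tailGapVec v P c i) := by
  rw [extension, timeMap_eq_of_ride hPc h₁ h₂, lift_eq_of_ride hPc h₁ h₂]

lemma extension_eq_of_replay (hPc : ∀ j, P v j ≤ c j)
    (hb : ∀ j, i < j → rideEnd u v P c j ≤ q) (ha : q ≤ rideStart u v P c i) :
    extension u v P c q = P (q - tailGap v P c i) + tailGapVec v P c i := by
  rw [extension, timeMap_eq_of_replay hPc hb ha, lift_eq_of_replay hPc hb ha]

lemma extension_apply_of_replay (hP : IsNSystem n (Icc u v) P) (huv : u ≤ v)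
    (hPc : ∀ j, P v j ≤ c j) (hq : u ≤ q) (hb : ∀ j, i < j → rideEnd u v P c j ≤ q)
    (ha : q ≤ rideStart u v P c i) (j : Fin n) :
    extension u v P c q j = if i < j then c j else P (q - tailGap v P c i) j := by
  rw [extension_eq_of_replay hPc hb ha, Pi.add_apply, tailGapVec]
  split_ifs with h
  · rw [apply_eq_of_tailSettleTime_le hP huv le_rfl (sub_tailGap_mem huv hq hb ha)
      (tailSettleTime_le_sub_tailGap hb h), gap, add_sub_cancel]
  · rw [add_zero]

lemma extension_rideEnd_zero (hP : IsNSystem n (Icc u v) P) (huv : u ≤ v)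
    (hPc : ∀ j, P v j ≤ c j) : extension u v P c (rideEnd u v P c 0) = c := by
  funext j
  rw [extension_eq_of_ride hPc (rideStart_le_rideEnd hPc 0) le_rfl, tailSettleTime_zero hP huv,
    Pi.add_apply, Pi.add_apply, smul_eVec_apply, rideEnd, add_sub_cancel_left, tailGapVec]
  rcases (Fin.zero_le j).eq_or_lt with rfl | h
  · simp [gap]
  · simp [h, h.ne', gap]

lemma extension_eq_of_apply_lt (hP : IsNSystem n (Icc u v) P) (huv : u ≤ v)
    (hPc : ∀ j, P v j ≤ c j) (hq : q ∈ Icc u v) (hlt : P q ⊤ < P v ⊤) :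
    extension u v P c q = P q ∧ timeMap u v P c q = q := by
  have hb : ∀ j, ⊤ < j → rideEnd u v P c j ≤ q := fun j h => absurd h not_top_lt
  have ha : q ≤ rideStart u v P c ⊤ := by
    rw [rideStart, tailGap_eq_zero_of_isMax isMax_top, add_zero]
    refine le_trans ?_ (settleTime_le_tailSettleTime le_rfl)
    exact not_lt.1 fun h => hlt.ne ((apply_eq_iff_settleTime_le hP huv hq).2 h.le)
  rw [extension_eq_of_replay hPc hb ha, timeMap_eq_of_replay hPc hb ha,
    tailGapVec_of_isMax isMax_top, tailGap_eq_zero_of_isMax isMax_top, sub_zero, add_zero]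
  exact ⟨rfl, rfl⟩

end Formulas

section ExtensionIsSystem

variable {n : ℕ} [NeZero n] {u v q : ℝ} {P : ℝ → RVec n} {c : Fin n → ℝ}
  {i k ℓ : Fin n}

lemma sum_extension (hP : IsNSystem n (Icc u v) P) (huv : u ≤ v) (hPc : ∀ j, P v j ≤ c j)
    (hq : q ∈ Icc u (rideEnd u v P c 0)) : ∑ j, extension u v P c q j = q := by
  obtain ⟨i, hb, hqb⟩ := exists_max_le_rideEnd hq.2
  have hb' : ∀ j, i < j → rideEnd u v P c j ≤ q := fun j hj => (hb j hj).le
  by_cases ha : rideStart u v P c i ≤ q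
  · have hsum := (hP.apply_nonneg_monotone_sum (tailSettleTime_mem (P := P) huv i)).2.2
    simp only [extension_eq_of_ride hPc ha hqb, Pi.add_apply, Finset.sum_add_distrib, hsum,
      smul_eVec_apply, Finset.sum_ite_eq', Finset.mem_univ, if_true, sum_tailGapVec, rideStart]
    ring
  · have ha := (not_le.1 ha).le
    have hsum := (hP.apply_nonneg_monotone_sum (sub_tailGap_mem huv hq.1 hb' ha)).2.2
    simp only [extension_eq_of_replay hPc hb' ha, Pi.add_apply, Finset.sum_add_distrib, hsum,
      sum_tailGapVec, sub_add_cancel]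

lemma extension_monotone (hP : IsNSystem n (Icc u v) P) (huv : u ≤ v) (hPc : ∀ j, P v j ≤ c j)
    (hc : StrictMono c) (hq : u ≤ q) : Monotone (extension u v P c q) := by
  intro j j' hjj'
  obtain rfl | hlt := hjj'.eq_or_lt
  · exact le_rfl
  have hA := timeMap_mem (P := P) (c := c) huv hq
  simp only [extension, Pi.add_apply]
  by_cases h : q ≤ rideStart u v P c j
  · rw [lift_apply_of_le_rideStart hPc h, add_zero]
    exact le_add_of_le_of_nonneg ((hP.apply_nonneg_monotone_sum hA).2.1 hjj') (lift_nonneg hPc)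
  · have hρ := tailSettleTime_le_timeMap (not_le.1 h).le
    rw [lift_apply_of_rideEnd_le hPc ((rideEnd_le_rideStart hPc hlt).trans (not_le.1 h).le),
      apply_eq_of_tailSettleTime_le hP huv hjj' hA hρ, gap, add_sub_cancel]
    have hPv := hP.monotoneOn_apply j hA ⟨huv, le_rfl⟩ hA.2
    linarith [lift_le_gap (u := u) (q := q) (j := j) hPc, hc hlt,
      show gap v P c j = c j - P v j from rfl]

lemma hasRightSlope_extension_of_ride {I : Set ℝ} (hPc : ∀ j, P v j ≤ c j)
    (h₁ : rideStart u v P c i ≤ q) (h₂ : q < rideEnd u v P c i) :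
    HasRightSlope I (extension u v P c) q i := by
  filter_upwards [self_mem_nhdsWithin, Ico_mem_nhdsGE h₂] with t hqt ht _
  rw [extension_eq_of_ride hPc (h₁.trans hqt) ht.2.le, extension_eq_of_ride hPc h₁ h₂.le]
  module

lemma hasLeftSlope_extension_of_ride {I : Set ℝ} (hPc : ∀ j, P v j ≤ c j)
    (h₁ : rideStart u v P c i < q) (h₂ : q ≤ rideEnd u v P c i) :
    HasLeftSlope I (extension u v P c) q i := by
  filter_upwards [self_mem_nhdsWithin, Ioc_mem_nhdsLE h₁] with t htq ht _
  rw [extension_eq_of_ride hPc ht.1.le (le_trans htq h₂), extension_eq_of_ride hPc h₁.le h₂]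
  module

lemma HasRightSlope.extension_of_replay {I : Set ℝ} (huv : u ≤ v) (hPc : ∀ j, P v j ≤ c j)
    (hq : u ≤ q) (hb : ∀ j, i < j → rideEnd u v P c j ≤ q) (ha : q < rideStart u v P c i)
    (h : HasRightSlope (Icc u v) P (q - tailGap v P c i) k) :
    HasRightSlope I (extension u v P c) q k := by
  have hT : Tendsto (· - tailGap v P c i) (𝓝[≥] q) (𝓝[≥] (q - tailGap v P c i)) :=
    (continuous_sub_right _).continuousWithinAt.tendsto_nhdsWithin fun _ ht =>
      sub_le_sub_right (α := ℝ) ht _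
  filter_upwards [hT.eventually h, self_mem_nhdsWithin, Ico_mem_nhdsGE ha] with t ht hqt hta _
  have hbt : ∀ j, i < j → rideEnd u v P c j ≤ t := fun j hj => (hb j hj).trans hqt
  rw [extension_eq_of_replay hPc hbt hta.2.le, extension_eq_of_replay hPc hb ha.le,
    ht (sub_tailGap_mem huv (hq.trans hqt) hbt hta.2.le)]
  module

lemma HasLeftSlope.extension_of_replay {I : Set ℝ} (huv : u ≤ v) (hPc : ∀ j, P v j ≤ c j)
    (hq : u < q) (hb : ∀ j, i < j → rideEnd u v P c j < q) (ha : q ≤ rideStart u v P c i)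
    (h : HasLeftSlope (Icc u v) P (q - tailGap v P c i) ℓ) :
    HasLeftSlope I (extension u v P c) q ℓ := by
  have hT : Tendsto (· - tailGap v P c i) (𝓝[≤] q) (𝓝[≤] (q - tailGap v P c i)) :=
    (continuous_sub_right _).continuousWithinAt.tendsto_nhdsWithin fun _ ht =>
      sub_le_sub_right (α := ℝ) ht _
  have hnear : ∀ᶠ t in 𝓝 q, u ≤ t ∧ ∀ j, i < j → rideEnd u v P c j ≤ t :=
    (eventually_ge_nhds hq).and <| eventually_all.2 fun j =>
      eventually_imp_distrib_left.2 fun hj => eventually_ge_nhds (hb j hj)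
  filter_upwards [hT.eventually h, self_mem_nhdsWithin, nhdsWithin_le_nhds hnear]
    with t ht htq ⟨hut, hbt⟩ _
  have hta : t ≤ rideStart u v P c i := le_trans htq ha
  rw [extension_eq_of_replay hPc hbt hta, extension_eq_of_replay hPc (fun j hj => (hb j hj).le) ha,
    ht (sub_tailGap_mem huv hut hbt hta)]
  module

end ExtensionIsSystem

section ExtensionSlopes

variable {n : ℕ} [NeZero n] {u v q : ℝ} {P : ℝ → RVec n} {c : Fin n → ℝ}
  {i k ℓ : Fin n}

lemma extension_exists_hasRightSlope {I : Set ℝ} (hP : IsNSystem n (Icc u v) P) (huv : u ≤ v)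
    (hPc : ∀ j, P v j ≤ c j) (hq : u ≤ q) (hqw : q < rideEnd u v P c 0) :
    ∃ k, HasRightSlope I (extension u v P c) q k := by
  obtain ⟨i, hb, hqb⟩ := exists_max_lt_rideEnd hqw
  by_cases ha : rideStart u v P c i ≤ q
  · exact ⟨i, hasRightSlope_extension_of_ride hPc ha hqb⟩
  · obtain ⟨k, -, hk, -, -⟩ := hP.exists_slopes (sub_tailGap_mem huv hq hb (not_le.1 ha).le)
    exact ⟨k, hk.extension_of_replay huv hPc hq hb (not_le.1 ha)⟩

lemma extension_exists_hasLeftSlope {I : Set ℝ} (hP : IsNSystem n (Icc u v) P) (huv : u ≤ v)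
    (hPc : ∀ j, P v j ≤ c j) (hq : u < q) (hqw : q ≤ rideEnd u v P c 0) :
    ∃ ℓ, HasLeftSlope I (extension u v P c) q ℓ := by
  obtain ⟨i, hb, hqb⟩ := exists_max_le_rideEnd hqw
  by_cases ha : rideStart u v P c i < q
  · exact ⟨i, hasLeftSlope_extension_of_ride hPc ha hqb⟩
  · have ha := not_lt.1 ha
    obtain ⟨-, ℓ, -, hℓ, -⟩ :=
      hP.exists_slopes (sub_tailGap_mem huv hq.le (fun j hj => (hb j hj).le) ha)
    exact ⟨ℓ, hℓ.extension_of_replay huv hPc hq hb ha⟩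

/-- Near a point of the `i`-th ride, the extension comes from the left either riding a coordinate
`≥ i` or replaying `P` up to `tailSettleTime i`, where some coordinate `m ≥ i` settles. -/
lemma le_of_hasLeftSlope_extension (hP : IsNSystem n (Icc u v) P) (huv : u ≤ v)
    (hPc : ∀ j, P v j ≤ c j) (h₁ : rideStart u v P c i ≤ q) (h₂ : q ≤ rideEnd u v P c i)
    (hq : u < q) (h : HasLeftSlope (Icc u (rideEnd u v P c 0)) (extension u v P c) q ℓ) :
    i ≤ ℓ := by
  have hqw : q ≤ rideEnd u v P c 0 := h₂.trans (rideEnd_antitone hPc (Fin.zero_le i))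
  have hI : Icc u (rideEnd u v P c 0) ∈ 𝓝[<] q := Icc_mem_nhdsLT_of_mem ⟨hq, hqw⟩
  obtain ⟨i₁, hb, hqb⟩ := exists_max_le_rideEnd hqw
  have hii₁ : i ≤ i₁ := not_lt.1 fun h => (hb i h).not_ge h₂
  by_cases ha : rideStart u v P c i₁ < q
  · exact hii₁.trans_eq ((hasLeftSlope_extension_of_ride hPc ha hqb).unique h hI)
  have hqa : q = rideStart u v P c i₁ :=
    le_antisymm (not_lt.1 ha) ((rideStart_antitone hPc hii₁).trans h₁)
  have hρ : q - tailGap v P c i₁ = tailSettleTime u v P i₁ := by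
    rw [hqa, rideStart, add_sub_cancel_right]
  obtain ⟨-, ℓ', -, hℓ', -⟩ :=
    hP.exists_slopes (sub_tailGap_mem huv hq.le (fun j hj => (hb j hj).le) hqa.le)
  have hℓℓ' := (hℓ'.extension_of_replay huv hPc hq hb hqa.le).unique h hI
  rw [hρ] at hℓ'
  exact hii₁.trans (hℓℓ' ▸ le_of_hasLeftSlope_tailSettleTime hP huv
    (hρ ▸ left_lt_sub_tailGap huv hq hb) hℓ')

lemma le_of_hasRightSlope_extension (hP : IsNSystem n (Icc u v) P) (huv : u ≤ v)
    (hPc : ∀ j, P v j ≤ c j) (hq : u ≤ q) (hqw : q < rideEnd u v P c 0)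
    (hb : ∀ j, i < j → rideEnd u v P c j ≤ q) (ha : q < rideStart u v P c i)
    (hk : HasRightSlope (Icc u (rideEnd u v P c 0)) (extension u v P c) q k) : k ≤ i := by
  have ht₀ := sub_tailGap_mem huv hq hb ha.le
  obtain ⟨k', -, hk', -, -⟩ := hP.exists_slopes ht₀
  obtain rfl := (hk'.extension_of_replay huv hPc hq hb ha).unique hk
    (Icc_mem_nhdsGT_of_mem ⟨hq, hqw⟩)
  exact le_of_hasRightSlope_of_tailSettleTime_le hP huv ht₀
    ((sub_tailGap_lt_tailSettleTime ha).trans_le (tailSettleTime_mem huv i).2)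
    (fun j hj => tailSettleTime_le_sub_tailGap hb hj) hk'

lemma hasSlopes_sub_tailGap (hP : IsNSystem n (Icc u v) P) (huv : u ≤ v)
    (hPc : ∀ j, P v j ≤ c j) (hq : q ∈ Ioo u (rideEnd u v P c 0))
    (hb : ∀ j, i < j → rideEnd u v P c j < q) (ha : q < rideStart u v P c i)
    (hk : HasRightSlope (Icc u (rideEnd u v P c 0)) (extension u v P c) q k)
    (hℓ : HasLeftSlope (Icc u (rideEnd u v P c 0)) (extension u v P c) q ℓ) :
    q - tailGap v P c i ∈ interior (Icc u v) ∧
      HasRightSlope (Icc u v) P (q - tailGap v P c i) k ∧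
      HasLeftSlope (Icc u v) P (q - tailGap v P c i) ℓ ∧
      (ℓ < k → ∀ j, ℓ ≤ j → j ≤ k →
        P (q - tailGap v P c i) j = P (q - tailGap v P c i) ℓ) := by
  have hb' : ∀ j, i < j → rideEnd u v P c j ≤ q := fun j hj => (hb j hj).le
  obtain ⟨k', ℓ', hk', hℓ', hS3⟩ := hP.exists_slopes (sub_tailGap_mem huv hq.1.le hb' ha.le)
  obtain rfl := (hk'.extension_of_replay huv hPc hq.1.le hb' ha).unique hk
    (Icc_mem_nhdsGT_of_mem ⟨hq.1.le, hq.2⟩)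
  obtain rfl := (hℓ'.extension_of_replay huv hPc hq.1 hb ha.le).unique hℓ
    (Icc_mem_nhdsLT_of_mem ⟨hq.1, hq.2.le⟩)
  have hint : q - tailGap v P c i ∈ interior (Icc u v) := by
    rw [interior_Icc]
    exact ⟨left_lt_sub_tailGap huv hq.1 hb,
      (sub_tailGap_lt_tailSettleTime ha).trans_le (tailSettleTime_mem huv i).2⟩
  exact ⟨hint, hk', hℓ', hS3 hint⟩

lemma extension_apply_eq_of_hasSlopes (hP : IsNSystem n (Icc u v) P) (huv : u ≤ v)
    (hPc : ∀ j, P v j ≤ c j) (hq : q ∈ Ioo u (rideEnd u v P c 0))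
    (hk : HasRightSlope (Icc u (rideEnd u v P c 0)) (extension u v P c) q k)
    (hℓ : HasLeftSlope (Icc u (rideEnd u v P c 0)) (extension u v P c) q ℓ) (hℓk : ℓ < k) :
    ∀ j, ℓ ≤ j → j ≤ k → extension u v P c q j = extension u v P c q ℓ := by
  obtain ⟨i, hb, hqb⟩ := exists_max_lt_rideEnd hq.2
  by_cases ha : rideStart u v P c i ≤ q
  · have hki := (hasRightSlope_extension_of_ride hPc ha hqb).unique hk
      (Icc_mem_nhdsGT_of_mem ⟨hq.1.le, hq.2⟩)
    exact absurd (hki ▸ le_of_hasLeftSlope_extension hP huv hPc ha hqb.le hq.1 hℓ) hℓk.not_ge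
  replace ha := not_le.1 ha
  have hki := le_of_hasRightSlope_extension hP huv hPc hq.1.le hq.2 hb ha hk
  by_cases hb' : ∀ j, i < j → rideEnd u v P c j < q
  · obtain ⟨-, -, -, hS3⟩ := hasSlopes_sub_tailGap hP huv hPc hq hb' ha hk hℓ
    intro j hℓj hjk
    simp only [extension_eq_of_replay hPc hb ha.le, Pi.add_apply, tailGapVec,
      if_neg (not_lt.2 (hjk.trans hki)), if_neg (not_lt.2 (hℓk.le.trans hki)),
      hS3 hℓk j hℓj hjk]
  · push Not at hb'
    obtain ⟨j, hij, hqj⟩ := hb'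
    have hjℓ := le_of_hasLeftSlope_extension hP huv hPc
      ((rideStart_le_rideEnd hPc j).trans (hb j hij)) hqj hq.1 hℓ
    exact absurd ((hki.trans_lt hij).trans_le hjℓ) hℓk.not_gt

lemma exists_isSwitchNumber_sub_tailGap (hP : IsNSystem n (Icc u v) P) (huv : u ≤ v)
    (hPc : ∀ j, P v j ≤ c j) (hq : q ∈ Ioo u (rideEnd u v P c 0))
    (hk : HasRightSlope (Icc u (rideEnd u v P c 0)) (extension u v P c) q k)
    (hℓ : HasLeftSlope (Icc u (rideEnd u v P c 0)) (extension u v P c) q ℓ) (hkℓ : k < ℓ) :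
    ∃ i, (∀ j, i < j → rideEnd u v P c j ≤ q) ∧ q ≤ rideStart u v P c i ∧
      IsSwitchNumber n (Icc u v) P (q - tailGap v P c i) := by
  obtain ⟨i, hb, hqb⟩ := exists_max_lt_rideEnd hq.2
  refine ⟨i, hb, ?_⟩
  by_cases ha : rideStart u v P c i ≤ q
  · have hki := (hasRightSlope_extension_of_ride hPc ha hqb).unique hk
      (Icc_mem_nhdsGT_of_mem ⟨hq.1.le, hq.2⟩)
    have hqa : q = rideStart u v P c i := le_antisymm (not_lt.1 fun ha' => hkℓ.ne <|
      hki.symm.trans ((hasLeftSlope_extension_of_ride hPc ha' hqb.le).unique hℓ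
        (Icc_mem_nhdsLT_of_mem ⟨hq.1, hq.2.le⟩))) ha
    refine ⟨hqa.le, ?_⟩
    rw [hqa, rideStart, add_sub_cancel_right]
    exact isSwitchNumber_tailSettleTime hP huv i
  replace ha := not_le.1 ha
  refine ⟨ha.le, ?_⟩
  by_cases hb' : ∀ j, i < j → rideEnd u v P c j < q
  · obtain ⟨hint, hk', hℓ', -⟩ := hasSlopes_sub_tailGap hP huv hPc hq hb' ha hk hℓ
    exact isSwitchNumber_of_slopes hint hkℓ hk' hℓ'
  · push Not at hb'
    obtain ⟨j, hij, hqj⟩ := hb'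
    obtain ⟨j', hij', hj'j, he⟩ := exists_rideEnd_eq (u := u) (v := v) (P := P) (c := c) hij
    have hρ : q - tailGap v P c i = tailSettleTime u v P j' := by
      linarith [rideEnd_antitone (u := u) hPc hj'j, hb j' hij']
    rw [hρ]
    exact isSwitchNumber_tailSettleTime hP huv j'

end ExtensionSlopes

section Rigid

variable {n : ℕ} {δ : ℝ}

def IsRigidPoint (δ : ℝ) (x : RVec n) : Prop :=
  (∀ j, 0 < x j) ∧ StrictMono x ∧ ∀ j, ∃ m : ℤ, x j = δ * m

lemma IsRigid.isRigidPoint {I : Set ℝ} {P : ℝ → RVec n} {q : ℝ} (hR : IsRigid n δ I P)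
    (hq : IsSwitchNumber n I P q) : IsRigidPoint δ (P q) :=
  ⟨(hR.1.2.2.2 q hq).1, (hR.1.2.2.2 q hq).2, hR.2 q hq⟩

lemma isRigid_of_isRigidPoint {I : Set ℝ} {P : ℝ → RVec n} (hP : IsNSystem n I P)
    (hI : IsClosed I) (hI₀ : I ⊆ Ioi 0)
    (h : ∀ q, IsSwitchNumber n I P q → IsRigidPoint δ (P q)) : IsRigid n δ I P :=
  ⟨⟨hP, hI, hI₀, fun q hq => ⟨(h q hq).1, (h q hq).2.1⟩⟩, fun q hq => (h q hq).2.2⟩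

lemma isRigidPoint_of_strictMono {c : Fin n → ℝ} (hδ : 0 < δ) (hc : StrictMono c)
    (hcδ : ∀ j, ∃ m : ℤ, 0 < m ∧ c j = δ * m) : IsRigidPoint δ c := by
  refine ⟨fun j => ?_, hc, fun j => (hcδ j).imp fun _ h => h.2⟩
  obtain ⟨m, hm, e⟩ := hcδ j
  rw [e]
  exact mul_pos hδ (Int.cast_pos.2 hm)

lemma IsRigidPoint.piecewise {x y : RVec n} (hx : IsRigidPoint δ x) (hy : IsRigidPoint δ y)
    (hxy : ∀ j, x j ≤ y j) (i : Fin n) :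
    IsRigidPoint δ fun j => if i < j then y j else x j := by
  refine ⟨fun j => ?_, fun j j' hjj' => ?_, fun j => ?_⟩
  · dsimp only
    split_ifs
    exacts [hy.1 j, hx.1 j]
  · dsimp only
    split_ifs with h h'
    · exact hy.2.1 hjj'
    · exact absurd (h.trans hjj') h'
    · exact (hxy j).trans_lt (hy.2.1 hjj')
    · exact hx.2.1 hjj'
  · dsimp only
    split_ifs
    exacts [hy.2.2 j, hx.2.2 j]

end Rigid

section ExtensionIsRigid

variable {n : ℕ} [NeZero n] {δ u v q : ℝ} {P : ℝ → RVec n} {c : Fin n → ℝ} {i : Fin n}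

lemma v_le_rideEnd_zero (hP : IsNSystem n (Icc u v) P) (huv : u ≤ v)
    (hPc : ∀ j, P v j ≤ c j) : v ≤ rideEnd u v P c 0 := by
  have h := rideStart_le_rideEnd (u := u) hPc 0
  rw [rideStart, tailSettleTime_zero hP huv] at h
  linarith [tailGap_nonneg hPc 0]

lemma isRigidPoint_extension_of_replay (hR : IsRigid n δ (Icc u v) P) (huv : u ≤ v)
    (hPc : ∀ j, P v j ≤ c j) (hc : IsRigidPoint δ c) (hq : u ≤ q)
    (hb : ∀ j, i < j → rideEnd u v P c j ≤ q) (ha : q ≤ rideStart u v P c i)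
    (hsw : IsSwitchNumber n (Icc u v) P (q - tailGap v P c i)) :
    IsRigidPoint δ (extension u v P c q) := by
  have ht₀ := sub_tailGap_mem huv hq hb ha
  rw [funext (extension_apply_of_replay hR.1.1 huv hPc hq hb ha)]
  exact (hR.isRigidPoint hsw).piecewise hc
    (fun j => (hR.1.1.monotoneOn_apply j ht₀ ⟨huv, le_rfl⟩ ht₀.2).trans (hPc j)) i

lemma isRigidPoint_extension (hR : IsRigid n δ (Icc u v) P) (huv : u < v)
    (hPc : ∀ j, P v j ≤ c j) (hc : IsRigidPoint δ c)
    (hq : IsSwitchNumber n (Icc u (rideEnd u v P c 0)) (extension u v P c) q) :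
    IsRigidPoint δ (extension u v P c q) := by
  have hP := hR.1.1
  rcases hq.exists_slopes with hfr | ⟨hint, k, ℓ, hkℓ, hk, hℓ⟩
  · rw [frontier_Icc (huv.le.trans (v_le_rideEnd_zero hP huv.le hPc))] at hfr
    obtain rfl | rfl : q = u ∨ q = rideEnd u v P c 0 := by simpa using hfr
    · refine isRigidPoint_extension_of_replay hR huv.le hPc hc le_rfl
        (fun j h => absurd h not_top_lt) ?_ ?_
      · exact (tailSettleTime_mem huv.le ⊤).1.trans
          (le_add_of_nonneg_right (tailGap_nonneg hPc ⊤))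
      · rw [tailGap_eq_zero_of_isMax isMax_top, sub_zero]
        exact isSwitchNumber_left huv.le
    · rw [extension_rideEnd_zero hP huv.le hPc]
      exact hc
  · rw [interior_Icc] at hint
    obtain ⟨i, hb, ha, hsw⟩ :=
      exists_isSwitchNumber_sub_tailGap hP huv.le hPc hint hk hℓ hkℓ
    exact isRigidPoint_extension_of_replay hR huv.le hPc hc hint.1.le hb ha hsw

lemma extension_isNSystem (hP : IsNSystem n (Icc u v) P) (hu : 0 ≤ u) (huv : u < v)
    (hPc : ∀ j, P v j ≤ c j) (hc : StrictMono c) :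
    IsNSystem n (Icc u (rideEnd u v P c 0)) (extension u v P c) := by
  have huw := huv.trans_le (v_le_rideEnd_zero hP huv.le hPc)
  refine isNSystem_of_slopes (fun t ht => hu.trans ht.1) ordConnected_Icc
    (by simpa [interior_Icc] using huw) (fun q hq => ⟨fun j => ?_,
      extension_monotone hP huv.le hPc hc hq.1, sum_extension hP huv.le hPc hq⟩)
    (fun q hq => ?_) (fun q hq => ?_) fun q hq k ℓ hk hℓ =>
      extension_apply_eq_of_hasSlopes hP huv.le hPc (by rwa [interior_Icc] at hq) hk hℓ
  · exact add_nonneg ((hP.apply_nonneg_monotone_sum (timeMap_mem huv.le hq.1)).1 j)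
      (lift_nonneg hPc)
  · obtain hqw | rfl := hq.2.lt_or_eq
    · exact extension_exists_hasRightSlope hP huv.le hPc hq.1 hqw
    · exact ⟨0, hasRightSlope_of_subset_Iic fun t ht => ht.2⟩
  · obtain rfl | huq := hq.1.eq_or_lt
    · exact ⟨0, hasLeftSlope_of_subset_Ici fun t ht => ht.1⟩
    · exact extension_exists_hasLeftSlope hP huv.le hPc huq hq.2

lemma extension_isRigid (hR : IsRigid n δ (Icc u v) P) (hu : 0 < u) (huv : u < v)
    (hPc : ∀ j, P v j ≤ c j) (hc : IsRigidPoint δ c) :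
    IsRigid n δ (Icc u (rideEnd u v P c 0)) (extension u v P c) :=
  isRigid_of_isRigidPoint (extension_isNSystem hR.1.1 hu.le huv hPc hc.2.1) isClosed_Icc
    (fun _ ht => hu.trans_le ht.1) fun _ hq => isRigidPoint_extension hR huv hPc hc hq

lemma timeMap_surjOn (hP : IsNSystem n (Icc u v) P) (huv : u ≤ v) (hPc : ∀ j, P v j ≤ c j) :
    SurjOn (timeMap u v P c) (Icc u (rideEnd u v P c 0)) (Icc u v) := by
  intro y hy
  obtain ⟨i, hi, hmax⟩ := Set.exists_max_image {i | y ≤ tailSettleTime u v P i} id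
    (Set.toFinite _) ⟨0, by simpa [tailSettleTime_zero hP huv] using hy.2⟩
  have hb : ∀ j, i < j → rideEnd u v P c j ≤ y + tailGap v P c i := fun j hj => by
    have hρ : tailSettleTime u v P j < y :=
      not_le.1 fun (h : y ≤ tailSettleTime u v P j) => (hmax j h).not_gt hj
    linarith [rideEnd_le_of_lt (u := u) hPc hj]
  have ha : y + tailGap v P c i ≤ rideStart u v P c i := by
    rw [rideStart]
    linarith [show y ≤ tailSettleTime u v P i from hi]
  refine ⟨y + tailGap v P c i, ⟨by linarith [hy.1, tailGap_nonneg hPc i],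
    ha.trans ((rideStart_le_rideEnd hPc i).trans (rideEnd_antitone hPc (Fin.zero_le i)))⟩, ?_⟩
  rw [timeMap_eq_of_replay hPc hb ha, add_sub_cancel_right]

end ExtensionIsRigid

/-- **Proposition (extension of a rigid system).** Let `P` be a rigid `n`-system of
mesh `δ` on a compact subinterval `[u,v]` of `(0,∞)` and let `c = (c₁ < ⋯ < c_n)` be
a strictly increasing sequence of positive multiples of `δ` with `P_j(v) ≤ c_j` for
each `j`; put `w = c₁ + ⋯ + c_n`.  Then there are a rigid `n`-system `P̃` of mesh `δ`
on `[u,w]` and a surjective map `A : [u,w] → [u,v]` such that: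
(i) `P̃(q) = P(q)` and `A(q) = q` whenever `q ∈ [u,v]` and `P_n(q) < P_n(v)`;
(ii) `P̃(w) = c`; (iii) `0 ≤ P̃_j(q) − P_j(A(q)) ≤ c_j − P_j(v)` for all `q ∈ [u,w]`
and all `j`. -/
theorem extend_rigid_system (n : ℕ) (hn : 2 ≤ n) (δ : ℝ) (hδ : 0 < δ)
    (u v : ℝ) (hu : 0 < u) (huv : u < v)
    (P : ℝ → RVec n) (hP : IsRigid n δ (Set.Icc u v) P)
    (c : Fin n → ℝ) (hc : StrictMono c)
    (hcδ : ∀ j, ∃ m : ℤ, 0 < m ∧ c j = δ * m)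
    (hPc : ∀ j, P v j ≤ c j) :
    ∃ (Pt : ℝ → RVec n) (A : ℝ → ℝ),
      IsRigid n δ (Set.Icc u (∑ j, c j)) Pt ∧
      Set.MapsTo A (Set.Icc u (∑ j, c j)) (Set.Icc u v) ∧
      Set.SurjOn A (Set.Icc u (∑ j, c j)) (Set.Icc u v) ∧
      (∀ q ∈ Set.Icc u v,
        P q ⟨n - 1, by omega⟩ < P v ⟨n - 1, by omega⟩ → Pt q = P q ∧ A q = q) ∧
      Pt (∑ j, c j) = c ∧
      (∀ q ∈ Set.Icc u (∑ j, c j), ∀ j,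
        0 ≤ Pt q j - P (A q) j ∧ Pt q j - P (A q) j ≤ c j - P v j) := by
  have : NeZero n := ⟨by omega⟩
  have hP₀ := hP.1.1
  have htop : (⟨n - 1, by omega⟩ : Fin n) = ⊤ := Fin.ext (Fin.val_top n).symm
  rw [← rideEnd_zero hP₀ huv.le, htop]
  refine ⟨extension u v P c, timeMap u v P c,
    extension_isRigid hP hu huv hPc (isRigidPoint_of_strictMono hδ hc hcδ),
    fun q hq => timeMap_mem huv.le hq.1, timeMap_surjOn hP₀ huv.le hPc,
    fun q hq hlt => extension_eq_of_apply_lt hP₀ huv.le hPc hq hlt,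
    extension_rideEnd_zero hP₀ huv.le hPc, fun q _ j => ?_⟩
  rw [extension, Pi.add_apply, add_sub_cancel_left]
  exact ⟨lift_nonneg hPc, lift_le_gap hPc⟩
end
end

section
/- Let E be an elementary path in Δ̄^(3) with vertices A, A*, B*, C*, C, B. Then the coordinatewise infimum of E is the point (x_1(C), min{x_2(C*), x_2(B)}, x_3(A*)), and the coordinatewise supremum of E is the point (x_1(A), max{x_2(B*), x_2(C)}, x_3(C*)), where x_i(·) denotes the i-th coordinate of a point of ℝ³ and the coordinatewise infimum (resp. supremum) of a bounded subset S of ℝ³ is the point whose i-th coordinate is the infimum (resp. supremum) of {x_i(s) : s ∈ S}. -/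
open Filter Set Pointwise Topology

noncomputable section

/-- The closed triangle `Δ̄⁽³⁾ = {0 ≤ x₁ ≤ x₂ ≤ x₃, x₁ + x₂ + x₃ = 1}`. -/
def DeltaBar3 : Set (RVec 3) :=
  {x | 0 ≤ x 0 ∧ x 0 ≤ x 1 ∧ x 1 ≤ x 2 ∧ x 0 + x 1 + x 2 = 1}

/-- The open triangle `Δ⁽³⁾ = {0 < x₁ < x₂ < x₃, x₁ + x₂ + x₃ = 1}`. -/
def DeltaOpen3 : Set (RVec 3) :=
  {x | 0 < x 0 ∧ x 0 < x 1 ∧ x 1 < x 2 ∧ x 0 + x 1 + x 2 = 1}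

def e1v : RVec 3 := ![1, 0, 0]
def e2v : RVec 3 := ![0, 1, 0]
def e3v : RVec 3 := ![0, 0, 1]
def f1v : RVec 3 := ![0, 1/2, 1/2]
def f2v : RVec 3 := ![1/3, 1/3, 1/3]

/-- The conditions on the six points `A, A*, B*, C*, C, B` of an elementary path in
`Δ̄⁽³⁾` (here `f₃ = e₃`). -/
def IsElemPath (A As Bs Cs C B : RVec 3) : Prop :=
  A ∈ segment ℝ f2v e3v ∧
  As ∈ segment ℝ f2v f1v ∩ segment ℝ A e2v ∧
  Bs ∈ segment ℝ As f1v ∧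
  Cs ∈ DeltaBar3 ∩ segment ℝ Bs e3v ∧
  C ∈ DeltaBar3 ∩ segment ℝ Cs e2v ∧
  B ∈ segment ℝ A e3v ∩ segment ℝ C e1v

/-- The strictness conditions for an elementary path: `A, B ∈ L`, `A*, B* ∈ L*`,
`C, C* ∈ Δ⁽³⁾`, where `L` and `L*` are the open segments `(f₂, f₃)` and `(f₂, f₁)`. -/
def IsStrictElemPath (A As Bs Cs C B : RVec 3) : Prop :=
  IsElemPath A As Bs Cs C B ∧
  A ∈ openSegment ℝ f2v e3v ∧ B ∈ openSegment ℝ f2v e3v ∧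
  As ∈ openSegment ℝ f2v f1v ∧ Bs ∈ openSegment ℝ f2v f1v ∧
  C ∈ DeltaOpen3 ∧ Cs ∈ DeltaOpen3

/-- The elementary path itself: the closed polygonal chain through
`A, A*, B*, C*, C, B, A`. -/
def pathSet (A As Bs Cs C B : RVec 3) : Set (RVec 3) :=
  segment ℝ A As ∪ segment ℝ As Bs ∪ segment ℝ Bs Cs ∪
    segment ℝ Cs C ∪ segment ℝ C B ∪ segment ℝ B A

/-!
Each coordinate is a linear functional, and the path lies between its vertex set and the convex
hull of that set, so every coordinate attains its extrema over the path at vertices. All vertices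
lie in the standard simplex, and along a segment towards `e_j` (or `f₁`) the `j`-th coordinate
can only grow while the others can only shrink; this orders the coordinates of the six vertices
and identifies the extremal ones.
-/

section Convex

variable {𝕜 E β : Type*} [Semiring 𝕜] [PartialOrder 𝕜] [AddCommMonoid E] [Module 𝕜 E]
  [AddCommMonoid β] [PartialOrder β] [IsOrderedAddMonoid β] [Module 𝕜 β] [PosSMulMono 𝕜 β]
  {f : E →ₗ[𝕜] β} {V S : Set E} {m : β}

theorem IsLeast.image_of_subset_convexHull (hm : IsLeast (f '' V) m) (hVS : V ⊆ S)
    (hSV : S ⊆ convexHull 𝕜 V) : IsLeast (f '' S) m := by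
  refine ⟨image_mono hVS hm.1, ?_⟩
  rintro _ ⟨x, hx, rfl⟩
  have hV : V ⊆ {w | m ≤ f w} := fun v hv => hm.2 (mem_image_of_mem f hv)
  exact convexHull_min hV (convex_halfSpace_ge f.isLinear m) (hSV hx)

theorem IsGreatest.image_of_subset_convexHull (hm : IsGreatest (f '' V) m) (hVS : V ⊆ S)
    (hSV : S ⊆ convexHull 𝕜 V) : IsGreatest (f '' S) m := by
  refine ⟨image_mono hVS hm.1, ?_⟩
  rintro _ ⟨x, hx, rfl⟩
  have hV : V ⊆ {w | f w ≤ m} := fun v hv => hm.2 (mem_image_of_mem f hv)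
  exact convexHull_min hV (convex_halfSpace_le f.isLinear m) (hSV hx)

end Convex

section Segment

variable {𝕜 ι : Type*} [Semiring 𝕜] [PartialOrder 𝕜] [IsOrderedRing 𝕜] {X Y p : ι → 𝕜} {i : ι}

theorem left_le_apply_of_mem_segment (hp : p ∈ segment 𝕜 X Y) (h : X i ≤ Y i) : X i ≤ p i :=
  (segment_subset_Icc h (Pi.segment_subset (M := fun _ => 𝕜) (s := univ) X Y hp i trivial)).1

theorem apply_le_left_of_mem_segment (hp : p ∈ segment 𝕜 X Y) (h : Y i ≤ X i) : p i ≤ X i :=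
  (segment_subset_Icc h
    (Pi.segment_subset (M := fun _ => 𝕜) (s := univ) Y X (segment_symm 𝕜 X Y ▸ hp) i trivial)).2

end Segment

theorem vecCons_mem_stdSimplex_fin_three {a b c : ℝ} (ha : 0 ≤ a) (hb : 0 ≤ b) (hc : 0 ≤ c)
    (habc : a + b + c = 1) : ![a, b, c] ∈ stdSimplex ℝ (Fin 3) :=
  ⟨fun i => by fin_cases i <;> assumption, by simpa [Fin.sum_univ_three] using habc⟩

section ElementaryPath

variable {A As Bs Cs C B : RVec 3}

theorem vertices_subset_pathSet :
    ({A, As, Bs, Cs, C, B} : Set (RVec 3)) ⊆ pathSet A As Bs Cs C B := by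
  simp [pathSet, insert_subset_iff, left_mem_segment]

theorem pathSet_subset_convexHull :
    pathSet A As Bs Cs C B ⊆ convexHull ℝ {A, As, Bs, Cs, C, B} := by
  simp only [pathSet, union_subset_iff]
  refine ⟨⟨⟨⟨⟨?_, ?_⟩, ?_⟩, ?_⟩, ?_⟩, ?_⟩ <;> exact segment_subset_convexHull (by simp) (by simp)

theorem IsLeast.image_pathSet {f : RVec 3 →ₗ[ℝ] ℝ} {m : ℝ}
    (h : IsLeast (f '' {A, As, Bs, Cs, C, B}) m) : IsLeast (f '' pathSet A As Bs Cs C B) m :=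
  h.image_of_subset_convexHull vertices_subset_pathSet pathSet_subset_convexHull

theorem IsGreatest.image_pathSet {f : RVec 3 →ₗ[ℝ] ℝ} {m : ℝ}
    (h : IsGreatest (f '' {A, As, Bs, Cs, C, B}) m) :
    IsGreatest (f '' pathSet A As Bs Cs C B) m :=
  h.image_of_subset_convexHull vertices_subset_pathSet pathSet_subset_convexHull

theorem IsElemPath.mem_stdSimplex (h : IsElemPath A As Bs Cs C B) :
    A ∈ stdSimplex ℝ (Fin 3) ∧ As ∈ stdSimplex ℝ (Fin 3) ∧ Bs ∈ stdSimplex ℝ (Fin 3) ∧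
      Cs ∈ stdSimplex ℝ (Fin 3) ∧ C ∈ stdSimplex ℝ (Fin 3) ∧ B ∈ stdSimplex ℝ (Fin 3) := by
  have hσ := convex_stdSimplex ℝ (Fin 3)
  have he₂ : e2v ∈ stdSimplex ℝ (Fin 3) :=
    vecCons_mem_stdSimplex_fin_three le_rfl zero_le_one le_rfl (by norm_num)
  have he₃ : e3v ∈ stdSimplex ℝ (Fin 3) :=
    vecCons_mem_stdSimplex_fin_three le_rfl le_rfl zero_le_one (by norm_num)
  have hf₁ : f1v ∈ stdSimplex ℝ (Fin 3) :=
    vecCons_mem_stdSimplex_fin_three le_rfl (by norm_num) (by norm_num) (by norm_num)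
  have hf₂ : f2v ∈ stdSimplex ℝ (Fin 3) :=
    vecCons_mem_stdSimplex_fin_three (by norm_num) (by norm_num) (by norm_num) (by norm_num)
  obtain ⟨hA, ⟨hAs, -⟩, hBs, ⟨-, hCs⟩, ⟨-, hC⟩, hB, -⟩ := h
  have hA := hσ.segment_subset hf₂ he₃ hA
  have hAs := hσ.segment_subset hf₂ hf₁ hAs
  have hBs := hσ.segment_subset hAs hf₁ hBs
  have hCs := hσ.segment_subset hBs he₃ hCs
  have hC := hσ.segment_subset hCs he₂ hC
  exact ⟨hA, hAs, hBs, hCs, hC, hσ.segment_subset hA he₃ hB⟩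

theorem IsElemPath.isLeast_isGreatest_vertices_apply_zero (h : IsElemPath A As Bs Cs C B) :
    IsLeast ((fun p : RVec 3 => p 0) '' {A, As, Bs, Cs, C, B}) (C 0) ∧
      IsGreatest ((fun p : RVec 3 => p 0) '' {A, As, Bs, Cs, C, B}) (A 0) := by
  obtain ⟨hAσ, hAsσ, hBsσ, hCsσ, hCσ, -⟩ := h.mem_stdSimplex
  obtain ⟨-, ⟨-, hAs⟩, hBs, ⟨-, hCs⟩, ⟨-, hC⟩, hBA, hBC⟩ := h
  have : C 0 ≤ B 0 :=
    left_le_apply_of_mem_segment hBC (by simpa [e1v] using (mem_Icc_of_mem_stdSimplex hCσ 0).2)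
  have : B 0 ≤ A 0 := apply_le_left_of_mem_segment hBA (by simpa [e3v] using hAσ.1 0)
  have : C 0 ≤ Cs 0 := apply_le_left_of_mem_segment hC (by simpa [e2v] using hCsσ.1 0)
  have : Cs 0 ≤ Bs 0 := apply_le_left_of_mem_segment hCs (by simpa [e3v] using hBsσ.1 0)
  have : Bs 0 ≤ As 0 := apply_le_left_of_mem_segment hBs (by simpa [f1v] using hAsσ.1 0)
  have : As 0 ≤ A 0 := apply_le_left_of_mem_segment hAs (by simpa [e2v] using hAσ.1 0)
  simp only [IsLeast, IsGreatest, image_insert_eq, image_singleton, lowerBounds_insert,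
    upperBounds_insert, lowerBounds_singleton, upperBounds_singleton, mem_insert_iff,
    mem_singleton_iff, mem_inter_iff, mem_Ici, mem_Iic]
  grind

theorem IsElemPath.isLeast_isGreatest_vertices_apply_one (h : IsElemPath A As Bs Cs C B) :
    IsLeast ((fun p : RVec 3 => p 1) '' {A, As, Bs, Cs, C, B}) (min (Cs 1) (B 1)) ∧
      IsGreatest ((fun p : RVec 3 => p 1) '' {A, As, Bs, Cs, C, B}) (max (Bs 1) (C 1)) := by
  obtain ⟨hAσ, -, hBsσ, hCsσ, hCσ, -⟩ := h.mem_stdSimplex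
  obtain ⟨-, ⟨hAsL, hAs⟩, hBs, ⟨-, hCs⟩, ⟨-, hC⟩, hBA, hBC⟩ := h
  have : Cs 1 ≤ C 1 :=
    left_le_apply_of_mem_segment hC (by simpa [e2v] using (mem_Icc_of_mem_stdSimplex hCsσ 1).2)
  have : Cs 1 ≤ Bs 1 := apply_le_left_of_mem_segment hCs (by simpa [e3v] using hBsσ.1 1)
  have : As 1 ≤ Bs 1 := left_le_apply_of_mem_segment hBs <|
    apply_le_left_of_mem_segment (by rwa [segment_symm]) (by norm_num [f1v, f2v])
  have : B 1 ≤ A 1 := apply_le_left_of_mem_segment hBA (by simpa [e3v] using hAσ.1 1)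
  have : A 1 ≤ As 1 :=
    left_le_apply_of_mem_segment hAs (by simpa [e2v] using (mem_Icc_of_mem_stdSimplex hAσ 1).2)
  have : B 1 ≤ C 1 := apply_le_left_of_mem_segment hBC (by simpa [e1v] using hCσ.1 1)
  simp only [IsLeast, IsGreatest, image_insert_eq, image_singleton, lowerBounds_insert,
    upperBounds_insert, lowerBounds_singleton, upperBounds_singleton, mem_insert_iff,
    mem_singleton_iff, mem_inter_iff, mem_Ici, mem_Iic, min_le_iff, le_max_iff]
  refine ⟨⟨?_, by grind⟩, ?_, by grind⟩
  · rcases min_choice (Cs 1) (B 1) with hm | hm <;> simp [hm]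
  · rcases max_choice (Bs 1) (C 1) with hm | hm <;> simp [hm]

theorem IsElemPath.isLeast_isGreatest_vertices_apply_two (h : IsElemPath A As Bs Cs C B) :
    IsLeast ((fun p : RVec 3 => p 2) '' {A, As, Bs, Cs, C, B}) (As 2) ∧
      IsGreatest ((fun p : RVec 3 => p 2) '' {A, As, Bs, Cs, C, B}) (Cs 2) := by
  obtain ⟨hAσ, -, hBsσ, hCsσ, hCσ, -⟩ := h.mem_stdSimplex
  obtain ⟨-, ⟨hAsL, hAs⟩, hBs, ⟨-, hCs⟩, ⟨-, hC⟩, hBA, hBC⟩ := h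
  have : As 2 ≤ Bs 2 := left_le_apply_of_mem_segment hBs <|
    apply_le_left_of_mem_segment (by rwa [segment_symm]) <| by
      simp only [f1v, f2v, Matrix.cons_val]; norm_num
  have : Bs 2 ≤ Cs 2 :=
    left_le_apply_of_mem_segment hCs (by simpa [e3v] using (mem_Icc_of_mem_stdSimplex hBsσ 2).2)
  have : As 2 ≤ A 2 := apply_le_left_of_mem_segment hAs (by simpa [e2v] using hAσ.1 2)
  have : A 2 ≤ B 2 :=
    left_le_apply_of_mem_segment hBA (by simpa [e3v] using (mem_Icc_of_mem_stdSimplex hAσ 2).2)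
  have : B 2 ≤ C 2 := apply_le_left_of_mem_segment hBC (by simpa [e1v] using hCσ.1 2)
  have : C 2 ≤ Cs 2 := apply_le_left_of_mem_segment hC (by simpa [e2v] using hCsσ.1 2)
  simp only [IsLeast, IsGreatest, image_insert_eq, image_singleton, lowerBounds_insert,
    upperBounds_insert, lowerBounds_singleton, upperBounds_singleton, mem_insert_iff,
    mem_singleton_iff, mem_inter_iff, mem_Ici, mem_Iic]
  grind

end ElementaryPath

/-- **Lemma (extrema on an elementary path).** For an elementary path `E` with
vertices `A, A*, B*, C*, C, B`, the coordinatewise infimum of `E` is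
`(x₁(C), min{x₂(C*), x₂(B)}, x₃(A*))` and the coordinatewise supremum is
`(x₁(A), max{x₂(B*), x₂(C)}, x₃(C*))`. -/
theorem elemPath_inf_sup (A As Bs Cs C B : RVec 3)
    (h : IsElemPath A As Bs Cs C B) :
    sInf ((fun p : RVec 3 => p 0) '' pathSet A As Bs Cs C B) = C 0 ∧
    sInf ((fun p : RVec 3 => p 1) '' pathSet A As Bs Cs C B) = min (Cs 1) (B 1) ∧
    sInf ((fun p : RVec 3 => p 2) '' pathSet A As Bs Cs C B) = As 2 ∧
    sSup ((fun p : RVec 3 => p 0) '' pathSet A As Bs Cs C B) = A 0 ∧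
    sSup ((fun p : RVec 3 => p 1) '' pathSet A As Bs Cs C B) = max (Bs 1) (C 1) ∧
    sSup ((fun p : RVec 3 => p 2) '' pathSet A As Bs Cs C B) = Cs 2 := by
  obtain ⟨inf₀, sup₀⟩ := h.isLeast_isGreatest_vertices_apply_zero
  obtain ⟨inf₁, sup₁⟩ := h.isLeast_isGreatest_vertices_apply_one
  obtain ⟨inf₂, sup₂⟩ := h.isLeast_isGreatest_vertices_apply_two
  exact ⟨(IsLeast.image_pathSet (f := LinearMap.proj 0) inf₀).csInf_eq,
    (IsLeast.image_pathSet (f := LinearMap.proj 1) inf₁).csInf_eq,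
    (IsLeast.image_pathSet (f := LinearMap.proj 2) inf₂).csInf_eq,
    (IsGreatest.image_pathSet (f := LinearMap.proj 0) sup₀).csSup_eq,
    (IsGreatest.image_pathSet (f := LinearMap.proj 1) sup₁).csSup_eq,
    (IsGreatest.image_pathSet (f := LinearMap.proj 2) sup₂).csSup_eq⟩
end
end
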